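/- arXiv:0707.2414 — 5 statements merged into one kernel-verified Lean document; each statement's English description precedes it below -/
import Mathlib

section
/- Intermediate exponential estimate in the proof of Theorem 1: Assume p > 1 and q > 1 with 1/p + 1/q = 1, and assume g ∈ H{G_1,…,G_n} and f ∈ H{F_1,…,F_n}. Suppose there exist real constants ε > 0, ξ_i > 0, α_{ij}, β_{ij} (i,j = 1,…,n) such that for every i: (−d̲_i + ε)ξ_i + G_i[ξ_i a*_{ii} + (1/p)Σ_{j≠i} ξ_j (a*_{ji})^{α_{ji}p}] + (1/q)ξ_i Σ_{j≠i} G_j (a*_{ij})^{(1−α_{ij})q} + (1/p)F_i Σ_{j=1}^n ξ_j (b*_{ji})^{β_{ji}p} e^{ε τ_{ji}} + (1/q)ξ_i Σ_{j=1}^n F_j (b*_{ij})^{(1−β_{ij})q} e^{ε τ_{ij}} ≤ 0. Then every solution u of the system satisfies: for each i = 1,…,n there is a constant C > 0 with |u_i(t + ω) − u_i(t)| ≤ C e^{−εt} for all t ≥ 0. -/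
open Real Finset

/-- `u : ℝ → Fin n → ℝ` is a solution of the delayed system
`u_i'(t) = -d_i(t) u_i(t) + ∑_j a_{ij}(t) g_j(u_j(t)) + ∑_j b_{ij}(t) f_j(u_j(t - τ_{ij})) + I_i(t)`
on `[-τmax, ∞)`: it is continuous on `[-τmax, ∞)` and differentiable, satisfying the
equations, for `t > 0`. -/
def IsSolution (n : ℕ) (τmax : ℝ)
    (d : Fin n → ℝ → ℝ) (a b : Fin n → Fin n → ℝ → ℝ) (I : Fin n → ℝ → ℝ)
    (g f : Fin n → ℝ → ℝ) (τ : Fin n → Fin n → ℝ)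
    (u : ℝ → Fin n → ℝ) : Prop :=
  (∀ i, ContinuousOn (fun t => u t i) (Set.Ici (-τmax))) ∧
  (∀ i, ∀ t : ℝ, 0 < t → HasDerivAt (fun s => u s i)
      (-(d i t) * u t i + ∑ j, a i j t * g j (u t j)
        + ∑ j, b i j t * f j (u (t - τ i j) j) + I i t) t)

/-- `v : ℝ → Fin n → ℝ` solves the delayed system on all of `ℝ`. -/
def IsGlobalSolution (n : ℕ)
    (d : Fin n → ℝ → ℝ) (a b : Fin n → Fin n → ℝ → ℝ) (I : Fin n → ℝ → ℝ)
    (g f : Fin n → ℝ → ℝ) (τ : Fin n → Fin n → ℝ)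
    (v : ℝ → Fin n → ℝ) : Prop :=
  ∀ i, ∀ t : ℝ, HasDerivAt (fun s => v s i)
      (-(d i t) * v t i + ∑ j, a i j t * g j (v t j)
        + ∑ j, b i j t * f j (v (t - τ i j) j) + I i t) t

/-!
Put `w(t) = e^{εt} (u(t + ω) - u(t))`. Periodicity of the coefficients and the Lipschitz bounds
on `g` and `f` give the delay differential inequality

  `w_i w_i' ≤ (ε - d̲_i) w_i² + |w_i| ∑_j (G_j a*_{ij} |w_j(t)| + F_j b*_{ij} e^{ετ_{ij}} |w_j(t - τ_{ij})|)`.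

For the Lyapunov functional

  `V(t) = ∑_i ξ_i |w_i(t)|^p + ∑_{i,j} ξ_i F_j (b*_{ij})^{β_{ij} p} e^{ετ_{ij}} ∫_{t-τ_{ij}}^t |w_j|^p`,

Young's inequality, applied after splitting each coefficient as `c = c^α c^{1-α}`, bounds `V'` by
`p ∑_i (criterion)_i |w_i|^p ≤ 0`. Hence `V` is nonincreasing, each `w_i` is bounded on `[0, ∞)`,
and `|u_i(t + ω) - u_i(t)| = e^{-εt} |w_i(t)|`.
-/

theorem young_inequality_split {p q : ℝ} (hpq : p.HolderConjugate q) {A x y : ℝ}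
    (hA : 0 ≤ A) (hx : 0 ≤ x) (hy : 0 ≤ y) (α : ℝ) :
    A * x ^ (p - 1) * y ≤
      1 / p * (A ^ (α * p) * y ^ p) + 1 / q * (A ^ ((1 - α) * q) * x ^ p) := by
  have key := young_inequality_of_nonneg (a := A ^ α * y) (b := A ^ (1 - α) * x ^ (p - 1))
    (by positivity) (by positivity) hpq
  rw [mul_rpow (by positivity) hy, mul_rpow (by positivity) (by positivity), ← rpow_mul hA,
    ← rpow_mul hA, ← rpow_mul hx, hpq.sub_one_mul_conj] at key
  have hA_split : A ^ α * A ^ (1 - α) = A := by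
    rw [← rpow_add' hA (by norm_num), add_sub_cancel, rpow_one]
  calc A * x ^ (p - 1) * y = A ^ α * y * (A ^ (1 - α) * x ^ (p - 1)) := by
        linear_combination (-(x ^ (p - 1) * y)) * hA_split
    _ ≤ _ := key
    _ = _ := by ring

theorem abs_rpow_sub_two_mul_le {p c R x D : ℝ} (hp : 1 < p)
    (h : x * D ≤ c * x ^ 2 + |x| * R) :
    |x| ^ (p - 2) * x * D ≤ c * |x| ^ p + |x| ^ (p - 1) * R := by
  have hsq : |x| ^ (p - 2) * x ^ 2 = |x| ^ p := by
    rw [← sq_abs, ← rpow_add_natCast' (abs_nonneg x) (by push_cast; linarith)]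
    norm_num
  have habs : |x| ^ (p - 2) * |x| = |x| ^ (p - 1) := by
    rw [← rpow_add_one' (abs_nonneg x) (by linarith)]
    ring_nf
  calc |x| ^ (p - 2) * x * D = |x| ^ (p - 2) * (x * D) := by ring
    _ ≤ |x| ^ (p - 2) * (c * x ^ 2 + |x| * R) := by gcongr
    _ = c * |x| ^ p + |x| ^ (p - 1) * R := by rw [← hsq, ← habs]; ring

theorem mul_neg_mul_add_le {x d dlow S R : ℝ} (hd : dlow ≤ d) (hS : |S| ≤ R) :
    x * (-d * x + S) ≤ -dlow * x ^ 2 + |x| * R := by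
  have h1 : x * S ≤ |x| * R :=
    (le_abs_self _).trans ((abs_mul x S).trans_le (mul_le_mul_of_nonneg_left hS (abs_nonneg x)))
  nlinarith [sq_nonneg x]

theorem abs_sum_mul_sub_le {n : ℕ} {c cstar L : Fin n → ℝ} {φ : Fin n → ℝ → ℝ}
    (hc : ∀ k, |c k| ≤ cstar k) (hφ : ∀ k x y, |φ k (x + y) - φ k x| ≤ L k * |y|)
    (x y : Fin n → ℝ) :
    |∑ k, c k * (φ k (y k) - φ k (x k))| ≤ ∑ k, L k * cstar k * |y k - x k| := by
  refine (abs_sum_le_sum_abs _ _).trans (sum_le_sum fun k _ => ?_)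
  have hφk := hφ k (x k) (y k - x k)
  rw [add_sub_cancel] at hφk
  calc |c k * (φ k (y k) - φ k (x k))| ≤ cstar k * (L k * |y k - x k|) := by
        rw [abs_mul]
        exact mul_le_mul (hc k) hφk (abs_nonneg _) ((abs_nonneg _).trans (hc k))
    _ = L k * cstar k * |y k - x k| := by ring

theorem Function.Periodic.abs_le_of_mem_upperBounds {φ : ℝ → ℝ} {ω s : ℝ}
    (hper : Function.Periodic φ ω) (hω : 0 < ω)
    (hs : s ∈ upperBounds ((fun t => |φ t|) '' Set.Ioc 0 ω)) (t : ℝ) : |φ t| ≤ s := by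
  obtain ⟨y, hy, hty⟩ := hper.exists_mem_Ioc hω t 0
  rw [hty]
  exact hs ⟨y, by simpa using hy, rfl⟩

theorem hasDerivAt_integral_of_continuousOn_Ici {v : ℝ → ℝ} {a x : ℝ}
    (hv : ContinuousOn v (Set.Ici a)) (hx : a < x) :
    HasDerivAt (fun y => ∫ s in a..y, v s) (v x) x :=
  intervalIntegral.integral_hasDerivAt_right
    ((hv.mono (by simp [Set.uIcc_of_le hx.le, Set.Icc_subset_Ici_self])).intervalIntegrable)
    ((hv.mono Set.Ioi_subset_Ici_self).stronglyMeasurableAtFilter isOpen_Ioi x hx)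
    (hv.continuousAt (Ici_mem_nhds hx))

theorem hasDerivAt_integral_delay {v : ℝ → ℝ} {a c t : ℝ} (hv : ContinuousOn v (Set.Ici a))
    (hc : 0 ≤ c) (ht : a < t - c) :
    HasDerivAt (fun s => ∫ x in (s - c)..s, v x) (v t - v (t - c)) t := by
  have hprim := fun x (hx : a < x) => hasDerivAt_integral_of_continuousOn_Ici hv hx
  have hint : ∀ x, a ≤ x → IntervalIntegrable v MeasureTheory.volume a x := fun x hx =>
    (hv.mono (by simp [Set.uIcc_of_le hx, Set.Icc_subset_Ici_self])).intervalIntegrable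
  refine ((hprim t (by linarith)).sub
    ((hprim (t - c) ht).comp_sub_const t c)).congr_of_eventuallyEq ?_
  filter_upwards [Ioi_mem_nhds (show a + c < t by linarith)] with s hs
  exact (intervalIntegral.integral_interval_sub_left (hint s (by simp at hs; linarith))
    (hint (s - c) (by simp at hs; linarith))).symm

theorem exists_hasDerivAt_exp_mul_le {n : ℕ} {z : ℝ → Fin n → ℝ} {A B τ : Fin n → Fin n → ℝ}
    {c ε t : ℝ} {j : Fin n}
    (h : ∃ D, HasDerivAt (fun s => z s j) D t ∧ z t j * D ≤ -c * z t j ^ 2 + |z t j| *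
      (∑ k, A j k * |z t k| + ∑ k, B j k * |z (t - τ j k) k|)) :
    ∃ D, HasDerivAt (fun s => exp (ε * s) * z s j) D t ∧
      exp (ε * t) * z t j * D ≤ (ε - c) * (exp (ε * t) * z t j) ^ 2 + |exp (ε * t) * z t j| *
        (∑ k, A j k * |exp (ε * t) * z t k|
          + ∑ k, B j k * exp (ε * τ j k) * |exp (ε * (t - τ j k)) * z (t - τ j k) k|) := by
  obtain ⟨D, hD, hle⟩ := h
  refine ⟨_, ((hasDerivAt_id' t).const_mul ε).exp.mul hD, ?_⟩
  have hE := exp_pos (ε * t)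
  have hweight : exp (ε * t) * (∑ k, A j k * |z t k| + ∑ k, B j k * |z (t - τ j k) k|) =
      ∑ k, A j k * |exp (ε * t) * z t k|
        + ∑ k, B j k * exp (ε * τ j k) * |exp (ε * (t - τ j k)) * z (t - τ j k) k| := by
    rw [mul_add, mul_sum, mul_sum]
    congr 1 <;> refine sum_congr rfl fun k _ => ?_
    · rw [abs_mul, abs_of_pos hE]; ring
    · rw [abs_mul, abs_of_pos (exp_pos _), show ε * t = ε * τ j k + ε * (t - τ j k) by ring,
        exp_add]
      ring
  calc exp (ε * t) * z t j * (exp (ε * t) * (ε * 1) * z t j + exp (ε * t) * D)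
      = ε * (exp (ε * t) * z t j) ^ 2 + exp (ε * t) ^ 2 * (z t j * D) := by ring
    _ ≤ ε * (exp (ε * t) * z t j) ^ 2 + exp (ε * t) ^ 2 * (-c * z t j ^ 2 + |z t j| *
        (∑ k, A j k * |z t k| + ∑ k, B j k * |z (t - τ j k) k|)) := by gcongr
    _ = _ := by rw [← hweight, abs_mul, abs_of_pos hE]; ring

section DelayInequality

variable {n : ℕ} (p q ε : ℝ) (dlow G F ξ : Fin n → ℝ) (astar bstar τ α β : Fin n → Fin n → ℝ)

/-- The left-hand side of the criterion of Theorem 1, indexed by `i`. -/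
noncomputable def lpCriterion (i : Fin n) : ℝ :=
  (-dlow i + ε) * ξ i
    + G i * (ξ i * astar i i
        + (1 / p) * ∑ j ∈ univ.erase i, ξ j * (astar j i) ^ (α j i * p))
    + (1 / q) * ξ i * ∑ j ∈ univ.erase i, G j * (astar i j) ^ ((1 - α i j) * q)
    + (1 / p) * F i * ∑ j, ξ j * (bstar j i) ^ (β j i * p) * exp (ε * τ j i)
    + (1 / q) * ξ i * ∑ j, F j * (bstar i j) ^ ((1 - β i j) * q) * exp (ε * τ i j)

noncomputable def delayWeight (j k : Fin n) : ℝ :=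
  ξ j * F k * bstar j k ^ (β j k * p) * exp (ε * τ j k)

noncomputable def lyapunovFunctional (w : ℝ → Fin n → ℝ) (t : ℝ) : ℝ :=
  ∑ j, ξ j * |w t j| ^ p
    + ∑ j, ∑ k, delayWeight p ε F ξ bstar τ β j k * ∫ s in (t - τ j k)..t, |w s k| ^ p

variable {p q}

theorem delayWeight_nonneg (hF : ∀ k, 0 ≤ F k) (hb : ∀ j k, 0 ≤ bstar j k)
    (hξ : ∀ j, 0 ≤ ξ j) (j k : Fin n) : 0 ≤ delayWeight p ε F ξ bstar τ β j k := by
  unfold delayWeight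
  have := hF k; have := hb j k; have := hξ j
  positivity

theorem mul_abs_rpow_le_lyapunovFunctional (hF : ∀ k, 0 ≤ F k) (hb : ∀ j k, 0 ≤ bstar j k)
    (hξ : ∀ j, 0 ≤ ξ j) (hτ : ∀ j k, 0 ≤ τ j k) (w : ℝ → Fin n → ℝ) (t : ℝ) (i : Fin n) :
    ξ i * |w t i| ^ p ≤ lyapunovFunctional p ε F ξ bstar τ β w t := by
  have hdelay : 0 ≤ ∑ j, ∑ k,
      delayWeight p ε F ξ bstar τ β j k * ∫ s in (t - τ j k)..t, |w s k| ^ p :=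
    sum_nonneg fun j _ => sum_nonneg fun k _ =>
      mul_nonneg (delayWeight_nonneg ε F ξ bstar τ β hF hb hξ j k)
        (intervalIntegral.integral_nonneg (by linarith [hτ j k]) fun s _ => by positivity)
  have hinst : ξ i * |w t i| ^ p ≤ ∑ j, ξ j * |w t j| ^ p :=
    single_le_sum (f := fun j => ξ j * |w t j| ^ p)
      (fun j _ => mul_nonneg (hξ j) (by positivity)) (mem_univ i)
  unfold lyapunovFunctional
  linarith

theorem hasDerivAt_lyapunovFunctional {τmax : ℝ} (hp : 1 < p) (hτ : ∀ j k, 0 ≤ τ j k)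
    (hτmax : ∀ j k, τ j k ≤ τmax) {w : ℝ → Fin n → ℝ}
    (hw : ∀ k, ContinuousOn (fun t => w t k) (Set.Ici (-τmax))) {t : ℝ} (ht : 0 < t)
    {D : Fin n → ℝ} (hD : ∀ j, HasDerivAt (fun s => w s j) (D j) t) :
    HasDerivAt (lyapunovFunctional p ε F ξ bstar τ β w)
      (∑ j, ξ j * (p * |w t j| ^ (p - 2) * w t j * D j)
        + ∑ j, ∑ k, delayWeight p ε F ξ bstar τ β j k
          * (|w t k| ^ p - |w (t - τ j k) k| ^ p)) t := by
  have hpow : ∀ k, ContinuousOn (fun s => |w s k| ^ p) (Set.Ici (-τmax)) := fun k =>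
    (hw k).abs.rpow_const fun _ _ => Or.inr (by linarith)
  refine HasDerivAt.add (HasDerivAt.fun_sum fun j _ => ?_)
    (HasDerivAt.fun_sum fun j _ => HasDerivAt.fun_sum fun k _ => ?_)
  · exact ((hasDerivAt_abs_rpow (w t j) hp).comp t (hD j)).const_mul (ξ j)
  · exact (hasDerivAt_integral_delay (hpow k) (hτ j k)
      (by linarith [hτmax j k])).const_mul _

variable (hpq : p.HolderConjugate q)
include hpq

theorem young_bound_instantaneous (hG : ∀ k, 0 ≤ G k) (ha : ∀ j k, 0 ≤ astar j k)
    {Y : Fin n → ℝ} (hY : ∀ j, 0 ≤ Y j) (j : Fin n) :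
    p * (Y j ^ (p - 1) * ∑ k, G k * astar j k * Y k) ≤
      p * (G j * astar j j * Y j ^ p)
        + ∑ k ∈ univ.erase j, G k * astar j k ^ (α j k * p) * Y k ^ p
        + p * (1 / q) * Y j ^ p * ∑ k ∈ univ.erase j, G k * astar j k ^ ((1 - α j k) * q) := by
  have hp := hpq.pos
  have hyoung : ∀ k, p * (Y j ^ (p - 1) * (G k * astar j k * Y k)) ≤
      G k * astar j k ^ (α j k * p) * Y k ^ p
        + p * (1 / q) * Y j ^ p * (G k * astar j k ^ ((1 - α j k) * q)) := fun k => by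
    have h := mul_le_mul_of_nonneg_left
      (young_inequality_split hpq (ha j k) (hY j) (hY k) (α j k)) (mul_nonneg hp.le (hG k))
    field_simp at h ⊢
    linarith
  rw [← add_sum_erase _ _ (mem_univ j), mul_add, mul_add, mul_sum, mul_sum, mul_sum,
    add_assoc, ← sum_add_distrib]
  refine add_le_add (le_of_eq ?_) (sum_le_sum fun k _ => hyoung k)
  have hpow := rpow_add_one' (hY j) (show p - 1 + 1 ≠ 0 by linarith)
  rw [sub_add_cancel] at hpow
  rw [hpow]
  ring

theorem young_bound_delayed (hF : ∀ k, 0 ≤ F k) (hb : ∀ j k, 0 ≤ bstar j k)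
    {Y : Fin n → ℝ} {Yd : Fin n → Fin n → ℝ} (hY : ∀ j, 0 ≤ Y j) (hYd : ∀ j k, 0 ≤ Yd j k)
    (j : Fin n) :
    p * (Y j ^ (p - 1) * ∑ k, F k * bstar j k * exp (ε * τ j k) * Yd j k) ≤
      ∑ k, F k * bstar j k ^ (β j k * p) * exp (ε * τ j k) * Yd j k ^ p
        + p * (1 / q) * Y j ^ p
          * ∑ k, F k * bstar j k ^ ((1 - β j k) * q) * exp (ε * τ j k) := by
  have hp := hpq.pos
  rw [mul_sum, mul_sum, mul_sum, ← sum_add_distrib]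
  refine sum_le_sum fun k _ => ?_
  have h := mul_le_mul_of_nonneg_left
    (young_inequality_split hpq (hb j k) (hY j) (hYd j k) (β j k))
    (mul_nonneg (mul_nonneg hp.le (hF k)) (exp_pos (ε * τ j k)).le)
  field_simp at h ⊢
  linarith

theorem sum_mul_lpCriterion (P : Fin n → ℝ) :
    ∑ j, p * lpCriterion p q ε dlow G F ξ astar bstar τ α β j * P j =
      ∑ j, ξ j * (p * ((ε - dlow j) * P j) + p * (G j * astar j j * P j)
          + p * (1 / q) * P j * ∑ k ∈ univ.erase j, G k * astar j k ^ ((1 - α j k) * q)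
          + p * (1 / q) * P j * ∑ k, F k * bstar j k ^ ((1 - β j k) * q) * exp (ε * τ j k))
        + ∑ j, ξ j * ∑ k ∈ univ.erase j, G k * astar j k ^ (α j k * p) * P k
        + ∑ j, ∑ k, delayWeight p ε F ξ bstar τ β j k * P k := by
  have hp := hpq.pos.ne'
  have hcols : ∑ j, ξ j * ∑ k ∈ univ.erase j, G k * astar j k ^ (α j k * p) * P k
      = ∑ j, G j * P j * ∑ k ∈ univ.erase j, ξ k * astar k j ^ (α k j * p) := by
    simp only [mul_sum]
    rw [sum_comm' (t' := univ) (s' := fun k => univ.erase k) (by simp [and_comm, ne_comm])]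
    exact sum_congr rfl fun _ _ => sum_congr rfl fun _ _ => by ring
  have hdelay : ∑ j, ∑ k, delayWeight p ε F ξ bstar τ β j k * P k
      = ∑ j, F j * P j * ∑ k, ξ k * bstar k j ^ (β k j * p) * exp (ε * τ k j) := by
    rw [sum_comm]
    simp only [mul_sum, delayWeight]
    exact sum_congr rfl fun _ _ => sum_congr rfl fun _ _ => by ring
  rw [hcols, hdelay, ← sum_add_distrib, ← sum_add_distrib]
  refine sum_congr rfl fun j _ => ?_
  unfold lpCriterion
  field_simp
  ring

theorem lyapunov_rate_le_sum_mul_lpCriterion (hG : ∀ k, 0 ≤ G k) (hF : ∀ k, 0 ≤ F k)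
    (ha : ∀ j k, 0 ≤ astar j k) (hb : ∀ j k, 0 ≤ bstar j k) (hξ : ∀ j, 0 ≤ ξ j)
    {Y : Fin n → ℝ} {Yd : Fin n → Fin n → ℝ} (hY : ∀ j, 0 ≤ Y j) (hYd : ∀ j k, 0 ≤ Yd j k) :
    ∑ j, ξ j * (p * ((ε - dlow j) * Y j ^ p + Y j ^ (p - 1) *
        (∑ k, G k * astar j k * Y k + ∑ k, F k * bstar j k * exp (ε * τ j k) * Yd j k)))
      + ∑ j, ∑ k, delayWeight p ε F ξ bstar τ β j k * (Y k ^ p - Yd j k ^ p)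
      ≤ ∑ j, p * lpCriterion p q ε dlow G F ξ astar bstar τ α β j * Y j ^ p := by
  rw [sum_mul_lpCriterion ε dlow G F ξ astar bstar τ α β hpq]
  have hterm : ∀ j, ξ j * (p * ((ε - dlow j) * Y j ^ p + Y j ^ (p - 1) *
        (∑ k, G k * astar j k * Y k + ∑ k, F k * bstar j k * exp (ε * τ j k) * Yd j k))) ≤
      ξ j * (p * ((ε - dlow j) * Y j ^ p) + p * (G j * astar j j * Y j ^ p)
          + p * (1 / q) * Y j ^ p * ∑ k ∈ univ.erase j, G k * astar j k ^ ((1 - α j k) * q)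
          + p * (1 / q) * Y j ^ p * ∑ k, F k * bstar j k ^ ((1 - β j k) * q) * exp (ε * τ j k))
        + ξ j * ∑ k ∈ univ.erase j, G k * astar j k ^ (α j k * p) * Y k ^ p
        + ∑ k, delayWeight p ε F ξ bstar τ β j k * Yd j k ^ p := fun j => by
    have hinst := young_bound_instantaneous G astar α hpq hG ha hY j
    have hdel := young_bound_delayed ε F bstar τ β hpq hF hb hY hYd j
    have hdelay_sum : ∑ k, delayWeight p ε F ξ bstar τ β j k * Yd j k ^ p
        = ξ j * ∑ k, F k * bstar j k ^ (β j k * p) * exp (ε * τ j k) * Yd j k ^ p := by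
      rw [mul_sum]
      exact sum_congr rfl fun k _ => by unfold delayWeight; ring
    rw [hdelay_sum]
    linarith [mul_le_mul_of_nonneg_left (add_le_add hinst hdel) (hξ j)]
  have hsplit : ∑ j, ∑ k, delayWeight p ε F ξ bstar τ β j k * (Y k ^ p - Yd j k ^ p)
      = ∑ j, ∑ k, delayWeight p ε F ξ bstar τ β j k * Y k ^ p
        - ∑ j, ∑ k, delayWeight p ε F ξ bstar τ β j k * Yd j k ^ p := by
    simp only [mul_sub, sum_sub_distrib]
  have hsum := sum_le_sum fun j (_ : j ∈ univ) => hterm j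
  simp only [sum_add_distrib] at hsum
  linarith

variable {τmax : ℝ} (hτ : ∀ j k, 0 ≤ τ j k) (hτmax : ∀ j k, τ j k ≤ τmax)
  (hG : ∀ k, 0 ≤ G k) (hF : ∀ k, 0 ≤ F k) (ha : ∀ j k, 0 ≤ astar j k)
  (hb : ∀ j k, 0 ≤ bstar j k) (hcrit : ∀ j, lpCriterion p q ε dlow G F ξ astar bstar τ α β j ≤ 0)
  {w : ℝ → Fin n → ℝ} (hw_cont : ∀ k, ContinuousOn (fun t => w t k) (Set.Ici (-τmax)))
  (hw : ∀ j, ∀ t > 0, ∃ D, HasDerivAt (fun s => w s j) D t ∧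
    w t j * D ≤ (ε - dlow j) * w t j ^ 2 + |w t j| *
      (∑ k, G k * astar j k * |w t k| + ∑ k, F k * bstar j k * exp (ε * τ j k) * |w (t - τ j k) k|))
include hτ hτmax hG hF ha hb hcrit hw_cont hw

theorem antitoneOn_lyapunovFunctional (hξ : ∀ j, 0 ≤ ξ j) :
    AntitoneOn (lyapunovFunctional p ε F ξ bstar τ β w) (Set.Ioi 0) := by
  have hp := hpq.lt
  have hderiv : ∀ t > 0, ∃ E ≤ 0, HasDerivAt (lyapunovFunctional p ε F ξ bstar τ β w) E t := by
    intro t ht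
    choose D hD hD_le using fun j => hw j t ht
    refine ⟨_, ?_, hasDerivAt_lyapunovFunctional ε F ξ bstar τ β hp hτ hτmax hw_cont ht hD⟩
    have hterm : ∀ j, ξ j * (p * |w t j| ^ (p - 2) * w t j * D j) ≤
        ξ j * (p * ((ε - dlow j) * |w t j| ^ p + |w t j| ^ (p - 1) *
          (∑ k, G k * astar j k * |w t k|
            + ∑ k, F k * bstar j k * exp (ε * τ j k) * |w (t - τ j k) k|))) := by
      intro j
      have h := abs_rpow_sub_two_mul_le hp (hD_le j)
      have := hξ j
      have := hpq.pos
      rw [mul_assoc p, mul_assoc p]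
      gcongr
    calc _ ≤ _ := add_le_add_left (sum_le_sum fun j _ => hterm j) _
      _ ≤ _ := lyapunov_rate_le_sum_mul_lpCriterion ε dlow G F ξ astar bstar τ α β hpq
          hG hF ha hb hξ (Y := fun j => |w t j|) (Yd := fun j k => |w (t - τ j k) k|)
          (fun j => abs_nonneg _) (fun j k => abs_nonneg _)
      _ ≤ 0 := sum_nonpos fun j _ => mul_nonpos_of_nonpos_of_nonneg
          (mul_nonpos_of_nonneg_of_nonpos hpq.pos.le (hcrit j)) (by positivity)
  choose! E hE_nonpos hE using hderiv
  refine antitoneOn_of_hasDerivWithinAt_nonpos (f' := E) (convex_Ioi 0)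
    (fun t ht => (hE t ht).continuousAt.continuousWithinAt) ?_ ?_
  · simpa using fun t ht => (hE t ht).hasDerivWithinAt
  · simpa using hE_nonpos

theorem exists_abs_le_of_delay_inequality (hξ : ∀ j, 0 < ξ j) (i : Fin n) :
    ∃ C, ∀ t, 0 ≤ t → |w t i| ≤ C := by
  set V := lyapunovFunctional p ε F ξ bstar τ β w
  have hV := mul_abs_rpow_le_lyapunovFunctional (p := p) ε F ξ bstar τ β hF hb
    (fun j => (hξ j).le) hτ w
  have hanti := antitoneOn_lyapunovFunctional ε dlow G F ξ astar bstar τ α β hpq hτ hτmax hG hF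
    ha hb hcrit hw_cont hw fun j => (hξ j).le
  -- `V` is only known to be differentiable on `(0, ∞)`, so `[0, 1]` is handled by compactness.
  obtain ⟨C₀, hC₀⟩ := isCompact_Icc.exists_bound_of_continuousOn ((hw_cont i).mono
    fun s (hs : s ∈ Set.Icc 0 1) => show -τmax ≤ s by linarith [hs.1, hτ i i, hτmax i i])
  refine ⟨max C₀ ((V 1 / ξ i) ^ p⁻¹), fun t ht => ?_⟩
  rcases le_total t 1 with h | h
  · exact (Real.norm_eq_abs _ ▸ hC₀ t ⟨ht, h⟩).trans (le_max_left _ _)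
  · have hV1 : 0 ≤ V 1 := (mul_nonneg (hξ i).le (by positivity)).trans (hV 1 i)
    refine le_max_of_le_right ((le_rpow_inv_iff_of_pos (abs_nonneg _)
      (div_nonneg hV1 (hξ i).le) hpq.pos).2 ?_)
    rw [le_div_iff₀' (hξ i)]
    exact (hV t i).trans (hanti (by norm_num) (by simp only [Set.mem_Ioi]; linarith) h)

end DelayInequality

theorem IsSolution.continuousOn_exp_mul_sub_shift {n : ℕ} {τmax ω : ℝ}
    {d : Fin n → ℝ → ℝ} {a b : Fin n → Fin n → ℝ → ℝ} {I : Fin n → ℝ → ℝ}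
    {g f : Fin n → ℝ → ℝ} {τ : Fin n → Fin n → ℝ} {u : ℝ → Fin n → ℝ}
    (hu : IsSolution n τmax d a b I g f τ u) (hω : 0 ≤ ω) (ε : ℝ) (k : Fin n) :
    ContinuousOn (fun t => exp (ε * t) * (u (t + ω) k - u t k)) (Set.Ici (-τmax)) :=
  (continuous_exp.comp (continuous_const_mul ε)).continuousOn.mul
    (((hu.1 k).comp (continuous_add_const ω).continuousOn
      fun t (ht : -τmax ≤ t) => show -τmax ≤ t + ω by linarith).sub (hu.1 k))

theorem IsSolution.exists_hasDerivAt_sub_shift {n : ℕ} {τmax ω : ℝ}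
    {d : Fin n → ℝ → ℝ} {a b : Fin n → Fin n → ℝ → ℝ} {I : Fin n → ℝ → ℝ}
    {g f : Fin n → ℝ → ℝ} {τ : Fin n → Fin n → ℝ} {u : ℝ → Fin n → ℝ}
    (hu : IsSolution n τmax d a b I g f τ u) (hω : 0 ≤ ω)
    (hd_per : ∀ i, Function.Periodic (d i) ω) (ha_per : ∀ i j, Function.Periodic (a i j) ω)
    (hb_per : ∀ i j, Function.Periodic (b i j) ω) (hI_per : ∀ i, Function.Periodic (I i) ω)
    {dlow G F : Fin n → ℝ} {astar bstar : Fin n → Fin n → ℝ} (hdlow : ∀ i t, dlow i ≤ d i t)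
    (ha : ∀ i j t, |a i j t| ≤ astar i j) (hb : ∀ i j t, |b i j t| ≤ bstar i j)
    (hg : ∀ i x u, |g i (x + u) - g i x| ≤ G i * |u|)
    (hf : ∀ i x u, |f i (x + u) - f i x| ≤ F i * |u|)
    {t : ℝ} (ht : 0 < t) (j : Fin n) :
    ∃ D, HasDerivAt (fun s => u (s + ω) j - u s j) D t ∧
      (u (t + ω) j - u t j) * D ≤ -dlow j * (u (t + ω) j - u t j) ^ 2 + |u (t + ω) j - u t j| *
        (∑ k, G k * astar j k * |u (t + ω) k - u t k|
          + ∑ k, F k * bstar j k * |u (t - τ j k + ω) k - u (t - τ j k) k|) := by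
  refine ⟨_, ((hu.2 j (t + ω) (by linarith)).comp_add_const t ω).sub (hu.2 j t ht), ?_⟩
  have hS_a := abs_sum_mul_sub_le (fun k => ha j k t) hg (fun k => u t k) (fun k => u (t + ω) k)
  have hS_b := abs_sum_mul_sub_le (fun k => hb j k t) hf (fun k => u (t - τ j k) k)
    (fun k => u (t - τ j k + ω) k)
  convert mul_neg_mul_add_le (hdlow j t) ((abs_add_le _ _).trans (add_le_add hS_a hS_b)) using 2
  have ha' : ∀ k x, a j k (x + ω) = a j k x := fun k => ha_per j k
  have hb' : ∀ k x, b j k (x + ω) = b j k x := fun k => hb_per j k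
  have hshift : ∀ c, t + ω - c = t - c + ω := fun c => by ring
  simp only [hd_per j t, hI_per j t, ha', hb', hshift, mul_sub, sum_sub_distrib]
  ring

theorem theorem1_intermediate_general
    (n : ℕ) (ω : ℝ) (hω : 0 < ω)
    (d : Fin n → ℝ → ℝ) (a b : Fin n → Fin n → ℝ → ℝ) (I : Fin n → ℝ → ℝ)
    (hd_per : ∀ i, Function.Periodic (d i) ω)
    (ha_per : ∀ i j, Function.Periodic (a i j) ω)
    (hb_per : ∀ i j, Function.Periodic (b i j) ω)
    (hI_per : ∀ i, Function.Periodic (I i) ω)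
    (τ : Fin n → Fin n → ℝ) (hτ : ∀ i j, 0 ≤ τ i j)
    (τmax : ℝ) (hτmax : IsGreatest {x | ∃ i j, x = τ i j} τmax)
    (dlow : Fin n → ℝ)
    (hdlow : ∀ i t, dlow i ≤ d i t)
    (astar bstar : Fin n → Fin n → ℝ)
    (hastar : ∀ i j, IsLUB ((fun t => |a i j t|) '' Set.Ioc 0 ω) (astar i j))
    (hbstar : ∀ i j, IsLUB ((fun t => |b i j t|) '' Set.Ioc 0 ω) (bstar i j))
    (G F : Fin n → ℝ) (hG : ∀ i, 0 < G i) (hF : ∀ i, 0 < F i)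
    (g f : Fin n → ℝ → ℝ)
    (hg : ∀ i x u, |g i (x + u) - g i x| ≤ G i * |u|)
    (hf : ∀ i x u, |f i (x + u) - f i x| ≤ F i * |u|)
    (p q : ℝ) (hp : 1 < p) (hpq : 1 / p + 1 / q = 1)
    (ε : ℝ) (ξ : Fin n → ℝ) (hξ : ∀ i, 0 < ξ i)
    (α β : Fin n → Fin n → ℝ)
    (hineq : ∀ i,
      (-dlow i + ε) * ξ i
        + G i * (ξ i * astar i i
            + (1 / p) * ∑ j ∈ univ.erase i, ξ j * (astar j i) ^ (α j i * p))
        + (1 / q) * ξ i * ∑ j ∈ univ.erase i, G j * (astar i j) ^ ((1 - α i j) * q)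
        + (1 / p) * F i * ∑ j, ξ j * (bstar j i) ^ (β j i * p) * exp (ε * τ j i)
        + (1 / q) * ξ i * ∑ j, F j * (bstar i j) ^ ((1 - β i j) * q) * exp (ε * τ i j)
        ≤ 0) :
    ∀ u : ℝ → Fin n → ℝ, IsSolution n τmax d a b I g f τ u →
      ∀ i, ∃ C > 0, ∀ t : ℝ, 0 ≤ t →
        |u (t + ω) i - u t i| ≤ C * exp (-ε * t) := by
  intro u hu i
  have hpq' : p.HolderConjugate q := holderConjugate_iff.2 ⟨hp, by simpa only [one_div] using hpq⟩
  have ha : ∀ j k t, |a j k t| ≤ astar j k := fun j k =>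
    (ha_per j k).abs_le_of_mem_upperBounds hω (hastar j k).1
  have hb : ∀ j k t, |b j k t| ≤ bstar j k := fun j k =>
    (hb_per j k).abs_le_of_mem_upperBounds hω (hbstar j k).1
  obtain ⟨C, hC⟩ := exists_abs_le_of_delay_inequality ε dlow G F ξ astar bstar τ α β hpq' hτ
    (fun j k => hτmax.2 ⟨j, k, rfl⟩) (fun k => (hG k).le) (fun k => (hF k).le)
    (fun j k => (abs_nonneg _).trans (ha j k 0)) (fun j k => (abs_nonneg _).trans (hb j k 0))
    hineq (hu.continuousOn_exp_mul_sub_shift hω.le ε) (fun j t ht => exists_hasDerivAt_exp_mul_le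
      (z := fun s k => u (s + ω) k - u s k) (A := fun j k => G k * astar j k)
      (B := fun j k => F k * bstar j k)
      (hu.exists_hasDerivAt_sub_shift hω.le hd_per ha_per hb_per hI_per hdlow ha hb hg hf ht j))
    hξ i
  refine ⟨max C 1, by positivity, fun t ht => ?_⟩
  have hCt := hC t ht
  rw [abs_mul, abs_of_pos (exp_pos _)] at hCt
  calc |u (t + ω) i - u t i| = exp (-ε * t) * (exp (ε * t) * |u (t + ω) i - u t i|) := by
        rw [← mul_assoc, ← exp_add, show -ε * t + ε * t = 0 by ring, exp_zero, one_mul]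
    _ ≤ exp (-ε * t) * max C 1 := by gcongr; exact hCt.trans (le_max_left _ _)
    _ = max C 1 * exp (-ε * t) := mul_comm _ _

/-- Intermediate exponential estimate in the proof of Theorem 1: under the `L^p` criterion, every solution `u` satisfies `|u_i(t + ω) - u_i(t)| = O(e^{-εt})`. -/
theorem theorem1_intermediate
    (n : ℕ) (hn : 1 ≤ n) (ω : ℝ) (hω : 0 < ω)
    (d : Fin n → ℝ → ℝ) (a b : Fin n → Fin n → ℝ → ℝ) (I : Fin n → ℝ → ℝ)
    (hd_cont : ∀ i, Continuous (d i)) (ha_cont : ∀ i j, Continuous (a i j))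
    (hb_cont : ∀ i j, Continuous (b i j)) (hI_cont : ∀ i, Continuous (I i))
    (hd_per : ∀ i, Function.Periodic (d i) ω)
    (ha_per : ∀ i j, Function.Periodic (a i j) ω)
    (hb_per : ∀ i j, Function.Periodic (b i j) ω)
    (hI_per : ∀ i, Function.Periodic (I i) ω)
    (τ : Fin n → Fin n → ℝ) (hτ : ∀ i j, 0 ≤ τ i j)
    (τmax : ℝ) (hτmax : IsGreatest {x | ∃ i j, x = τ i j} τmax)
    (dlow : Fin n → ℝ) (hdlow_pos : ∀ i, 0 < dlow i)
    (hdlow : ∀ i t, dlow i ≤ d i t)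
    (astar bstar : Fin n → Fin n → ℝ)
    (hastar : ∀ i j, IsLUB ((fun t => |a i j t|) '' Set.Ioc 0 ω) (astar i j))
    (hbstar : ∀ i j, IsLUB ((fun t => |b i j t|) '' Set.Ioc 0 ω) (bstar i j))
    (G F : Fin n → ℝ) (hG : ∀ i, 0 < G i) (hF : ∀ i, 0 < F i)
    (g f : Fin n → ℝ → ℝ)
    (hg : ∀ i x u, |g i (x + u) - g i x| ≤ G i * |u|)
    (hf : ∀ i x u, |f i (x + u) - f i x| ≤ F i * |u|)
    (p q : ℝ) (hp : 1 < p) (hq : 1 < q) (hpq : 1 / p + 1 / q = 1)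
    (ε : ℝ) (hε : 0 < ε) (ξ : Fin n → ℝ) (hξ : ∀ i, 0 < ξ i)
    (α β : Fin n → Fin n → ℝ)
    (hineq : ∀ i,
      (-dlow i + ε) * ξ i
        + G i * (ξ i * astar i i
            + (1 / p) * ∑ j ∈ univ.erase i, ξ j * (astar j i) ^ (α j i * p))
        + (1 / q) * ξ i * ∑ j ∈ univ.erase i, G j * (astar i j) ^ ((1 - α i j) * q)
        + (1 / p) * F i * ∑ j, ξ j * (bstar j i) ^ (β j i * p) * exp (ε * τ j i)
        + (1 / q) * ξ i * ∑ j, F j * (bstar i j) ^ ((1 - β i j) * q) * exp (ε * τ i j)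
        ≤ 0) :
    ∀ u : ℝ → Fin n → ℝ, IsSolution n τmax d a b I g f τ u →
      ∀ i, ∃ C > 0, ∀ t : ℝ, 0 ≤ t →
        |u (t + ω) i - u t i| ≤ C * exp (-ε * t) :=
  theorem1_intermediate_general n ω hω d a b I hd_per ha_per hb_per hI_per τ hτ τmax hτmax dlow
    hdlow astar bstar hastar hbstar G F hG hF g f hg hf p q hp hpq ε ξ hξ α β hineq
end

section
/- Exponential contraction of pairs of solutions (uniqueness part of Theorem 1): Assume p > 1 and q > 1 with 1/p + 1/q = 1, and assume g ∈ H{G_1,…,G_n} and f ∈ H{F_1,…,F_n}. Suppose there exist real constants ε > 0, ξ_i > 0, α_{ij}, β_{ij} (i,j = 1,…,n) such that for every i: (−d̲_i + ε)ξ_i + G_i[ξ_i a*_{ii} + (1/p)Σ_{j≠i} ξ_j (a*_{ji})^{α_{ji}p}] + (1/q)ξ_i Σ_{j≠i} G_j (a*_{ij})^{(1−α_{ij})q} + (1/p)F_i Σ_{j=1}^n ξ_j (b*_{ji})^{β_{ji}p} e^{ε τ_{ji}} + (1/q)ξ_i Σ_{j=1}^n F_j (b*_{ij})^{(1−β_{ij})q}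 e^{ε τ_{ij}} ≤ 0. Then for any two solutions u and ũ of the system and each i = 1,…,n there is a constant C > 0 with |u_i(t) − ũ_i(t)| ≤ C e^{−εt} for all t ≥ 0. -/
/-!
Put `z = u - v` and `w = exp (ε t) z`. Each `w_k` satisfies the delayed differential inequality
`w_k w_k' ≤ |w_k| ((ε - d̲_k)|w_k| + ∑_j a*_{kj} G_j |w_j(t)|
  + ∑_j b*_{kj} F_j e^{ετ_{kj}} |w_j(t - τ_{kj})|)`.
Along it the Lyapunov–Krasovskii functional
`V(t) = ∑_k ξ_k |w_k(t)|^p + ∑_{k,j} c_{kj} ∫_{t-τ_{kj}}^t |w_j|^p`,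
`c_{kj} = ξ_k F_j (b*_{kj})^{β_{kj} p} e^{ετ_{kj}}`, is nonincreasing: Young's inequality for each
cross term `|w_k|^{p-1} |w_j|`, with the coefficient split as `a^{1-α} · a^α`, bounds `V'` by
`∑_k p |w_k|^p` times the left-hand side of the hypothesis. So `ξ_i |w_i(t)|^p ≤ V(0)` for `t ≥ 0`,
i.e. `|z_i(t)| ≤ (V(0) / ξ_i)^{1/p} e^{-εt}`.
-/

open Real Finset

theorem Function.Periodic.abs_le_of_isLUB {h : ℝ → ℝ} {ω M : ℝ} (hper : Function.Periodic h ω)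
    (hω : 0 < ω) (hM : IsLUB ((fun t => |h t|) '' Set.Ioc 0 ω) M) (t : ℝ) : |h t| ≤ M := by
  obtain ⟨s, hs, hst⟩ := hper.exists_mem_Ioc hω t 0
  rw [zero_add] at hs
  exact hst ▸ hM.1 ⟨s, hs, rfl⟩

theorem mul_le_abs_mul_of_abs_le {x y r : ℝ} (h : |y| ≤ r) : x * y ≤ |x| * r :=
  (le_abs_self _).trans (abs_mul x y ▸ mul_le_mul_of_nonneg_left h (abs_nonneg x))

theorem abs_sum_mul_sub_le_s3 {n : ℕ} {a A G : Fin n → ℝ} {g : Fin n → ℝ → ℝ}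
    (ha : ∀ j, |a j| ≤ A j) (hg : ∀ j x u, |g j (x + u) - g j x| ≤ G j * |u|) (x y : Fin n → ℝ) :
    |∑ j, a j * (g j (x j) - g j (y j))| ≤ ∑ j, A j * G j * |x j - y j| := by
  refine (abs_sum_le_sum_abs _ _).trans (sum_le_sum fun j _ => ?_)
  have hgj := hg j (y j) (x j - y j)
  rw [add_sub_cancel] at hgj
  rw [abs_mul, mul_assoc]
  exact mul_le_mul (ha j) hgj (abs_nonneg _) ((abs_nonneg _).trans (ha j))

-- The sign-free form of `D⁺|z_k| ≤ -δ_k |z_k| + ∑_j P_kj |z_j(t)| + ∑_j Q_kj |z_j(t - τ_kj)|`.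
def DelayDiffIneq {n : ℕ} (δ : Fin n → ℝ) (P Q τ : Fin n → Fin n → ℝ) (z : ℝ → Fin n → ℝ) :
    Prop :=
  ∀ k, ∀ t, 0 < t → ∃ z', HasDerivAt (fun s => z s k) z' t ∧
    z t k * z' ≤ |z t k| * (-δ k * |z t k| + ∑ j, P k j * |z t j| + ∑ j, Q k j * |z (t - τ k j) j|)

theorem IsSolution.delayDiffIneq_sub {n : ℕ} {τmax : ℝ} {d : Fin n → ℝ → ℝ}
    {a b : Fin n → Fin n → ℝ → ℝ} {I : Fin n → ℝ → ℝ} {g f : Fin n → ℝ → ℝ}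
    {τ : Fin n → Fin n → ℝ} {u v : ℝ → Fin n → ℝ} {dlow G F : Fin n → ℝ} {A B : Fin n → Fin n → ℝ}
    (hu : IsSolution n τmax d a b I g f τ u) (hv : IsSolution n τmax d a b I g f τ v)
    (hd : ∀ k t, dlow k ≤ d k t) (ha : ∀ k j t, |a k j t| ≤ A k j) (hb : ∀ k j t, |b k j t| ≤ B k j)
    (hg : ∀ j x u, |g j (x + u) - g j x| ≤ G j * |u|)
    (hf : ∀ j x u, |f j (x + u) - f j x| ≤ F j * |u|) :
    DelayDiffIneq dlow (fun k j => A k j * G j) (fun k j => B k j * F j) τ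
      (fun t k => u t k - v t k) := by
  intro k t ht
  refine ⟨_, (hu.2 k t ht).sub (hv.2 k t ht), ?_⟩
  dsimp only
  set z := u t k - v t k
  have hrhs : -d k t * u t k + ∑ j, a k j t * g j (u t j)
        + ∑ j, b k j t * f j (u (t - τ k j) j) + I k t
      - (-d k t * v t k + ∑ j, a k j t * g j (v t j)
        + ∑ j, b k j t * f j (v (t - τ k j) j) + I k t)
      = -d k t * z + ∑ j, a k j t * (g j (u t j) - g j (v t j))
        + ∑ j, b k j t * (f j (u (t - τ k j) j) - f j (v (t - τ k j) j)) := by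
    simp only [z, mul_sub, sum_sub_distrib]; ring
  have hdecay : z * (-d k t * z) ≤ |z| * (-dlow k * |z|) := by
    have hz2 : |z| * (-dlow k * |z|) = -(dlow k * (z * z)) := by rw [← abs_mul_abs_self z]; ring
    linarith [mul_le_mul_of_nonneg_right (hd k t) (mul_self_nonneg z)]
  rw [hrhs, mul_add, mul_add, mul_add, mul_add]
  exact add_le_add (add_le_add hdecay
    (mul_le_abs_mul_of_abs_le (abs_sum_mul_sub_le_s3 (ha k · t) hg _ _)))
    (mul_le_abs_mul_of_abs_le (abs_sum_mul_sub_le_s3 (hb k · t) hf _ _))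

theorem DelayDiffIneq.comp_max {n : ℕ} {δ : Fin n → ℝ} {P Q τ : Fin n → Fin n → ℝ}
    {z : ℝ → Fin n → ℝ} (hz : DelayDiffIneq δ P Q τ z) {T : ℝ} (hT : 0 ≤ T)
    (hτT : ∀ k j, τ k j ≤ T) :
    DelayDiffIneq δ P Q τ (fun t k => z (max t (-T)) k) := by
  intro k t ht
  obtain ⟨z', hz', hle⟩ := hz k t ht
  have hnear : (fun s => z (max s (-T)) k) =ᶠ[nhds t] fun s => z s k := by
    filter_upwards [Ioi_mem_nhds (show -T < t by linarith)] with s hs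
    rw [max_eq_left (Set.mem_Ioi.1 hs).le]
  have hnow : ∀ j, z (max t (-T)) j = z t j := fun j => by rw [max_eq_left (by linarith)]
  have hpast : ∀ j, z (max (t - τ k j) (-T)) j = z (t - τ k j) j := fun j => by
    rw [max_eq_left (by linarith [hτT k j])]
  exact ⟨z', hz'.congr_of_eventuallyEq hnear, by simpa only [hnow, hpast] using hle⟩

theorem DelayDiffIneq.exp_mul {n : ℕ} {δ : Fin n → ℝ} {P Q τ : Fin n → Fin n → ℝ}
    {z : ℝ → Fin n → ℝ} (hz : DelayDiffIneq δ P Q τ z) (ε : ℝ) :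
    DelayDiffIneq (fun k => δ k - ε) P (fun k j => Q k j * exp (ε * τ k j)) τ
      (fun t k => exp (ε * t) * z t k) := by
  intro k t ht
  obtain ⟨z', hz', hle⟩ := hz k t ht
  have hexp : HasDerivAt (fun s => exp (ε * s)) (exp (ε * t) * ε) t := by
    simpa using ((hasDerivAt_id t).const_mul ε).exp
  refine ⟨_, hexp.mul hz', ?_⟩
  have hP : ∑ j, P k j * |exp (ε * t) * z t j| = exp (ε * t) * ∑ j, P k j * |z t j| := by
    rw [mul_sum]; congr! 1 with j; rw [abs_mul, abs_exp]; ring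
  have hQ : ∑ j, Q k j * exp (ε * τ k j) * |exp (ε * (t - τ k j)) * z (t - τ k j) j|
      = exp (ε * t) * ∑ j, Q k j * |z (t - τ k j) j| := by
    rw [mul_sum]; congr! 1 with j
    rw [abs_mul, abs_exp, show ε * t = ε * τ k j + ε * (t - τ k j) by ring, exp_add]; ring
  dsimp only
  rw [hP, hQ, abs_mul, abs_exp]
  have hzz : |z t k| * |z t k| = z t k * z t k := abs_mul_abs_self _
  have := mul_le_mul_of_nonneg_left hle (mul_self_nonneg (exp (ε * t)))
  linear_combination this - ε * exp (ε * t) ^ 2 * hzz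

theorem HasDerivAt.abs_rpow_le {f : ℝ → ℝ} {f' t R p : ℝ} (hf : HasDerivAt f f' t) (hp : 1 < p)
    (hle : f t * f' ≤ |f t| * R) :
    ∃ D, HasDerivAt (fun s => |f s| ^ p) D t ∧ D ≤ p * |f t| ^ (p - 1) * R := by
  refine ⟨_, (hasDerivAt_abs_rpow (f t) hp).comp t hf, ?_⟩
  have hpow : |f t| ^ (p - 2) * |f t| = |f t| ^ (p - 1) := by
    rw [← Real.rpow_add_one' (abs_nonneg _) (by linarith)]; ring_nf
  calc p * |f t| ^ (p - 2) * f t * f' = p * |f t| ^ (p - 2) * (f t * f') := by ring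
    _ ≤ p * |f t| ^ (p - 2) * (|f t| * R) := by gcongr
    _ = p * |f t| ^ (p - 1) * R := by rw [← hpow]; ring

theorem hasDerivAt_integral_sub_delay {ψ : ℝ → ℝ} (hψ : Continuous ψ) (τ t : ℝ) :
    HasDerivAt (fun r => ∫ s in (r - τ)..r, ψ s) (ψ t - ψ (t - τ)) t := by
  have hsplit : (fun r => ∫ s in (r - τ)..r, ψ s)
      = fun r => (∫ s in (0 : ℝ)..r, ψ s) - ∫ s in (0 : ℝ)..(r - τ), ψ s := by
    funext r
    exact (intervalIntegral.integral_interval_sub_left (hψ.intervalIntegrable _ _)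
      (hψ.intervalIntegrable _ _)).symm
  rw [hsplit]
  exact (hψ.integral_hasStrictDerivAt 0 t).hasDerivAt.sub
    ((hψ.integral_hasStrictDerivAt 0 (t - τ)).hasDerivAt.comp_sub_const t τ)

noncomputable def delayLyapunov {n : ℕ} (ξ : Fin n → ℝ) (c τ : Fin n → Fin n → ℝ)
    (ψ : Fin n → ℝ → ℝ) (t : ℝ) : ℝ :=
  ∑ k, ξ k * ψ k t + ∑ k, ∑ j, c k j * ∫ s in (t - τ k j)..t, ψ j s

section delayLyapunov

variable {n : ℕ} {ξ : Fin n → ℝ} {c τ : Fin n → Fin n → ℝ} {ψ : Fin n → ℝ → ℝ}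

theorem hasDerivAt_delayLyapunov {ψ' : Fin n → ℝ} {t : ℝ} (hψ : ∀ k, Continuous (ψ k))
    (hψ' : ∀ k, HasDerivAt (ψ k) (ψ' k) t) :
    HasDerivAt (delayLyapunov ξ c τ ψ)
      (∑ k, ξ k * ψ' k + ∑ k, ∑ j, c k j * (ψ j t - ψ j (t - τ k j))) t := by
  unfold delayLyapunov
  exact (HasDerivAt.fun_sum fun k _ => (hψ' k).const_mul (ξ k)).add
    (HasDerivAt.fun_sum fun k _ => HasDerivAt.fun_sum fun j _ =>
      (hasDerivAt_integral_sub_delay (hψ j) (τ k j) t).const_mul (c k j))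

theorem continuous_delayLyapunov (hψ : ∀ k, Continuous (ψ k)) :
    Continuous (delayLyapunov ξ c τ ψ) := by
  unfold delayLyapunov
  refine (continuous_finsetSum _ fun k _ => continuous_const.mul (hψ k)).add
    (continuous_finsetSum _ fun k _ => continuous_finsetSum _ fun j _ =>
      continuous_const.mul (continuous_iff_continuousAt.2 fun t => ?_))
  exact (hasDerivAt_integral_sub_delay (hψ j) (τ k j) t).continuousAt

theorem antitoneOn_delayLyapunov (hψ : ∀ k, Continuous (ψ k))
    (hderiv : ∀ t, 0 < t → ∃ ψ' : Fin n → ℝ, (∀ k, HasDerivAt (ψ k) (ψ' k) t) ∧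
      ∑ k, ξ k * ψ' k + ∑ k, ∑ j, c k j * (ψ j t - ψ j (t - τ k j)) ≤ 0) :
    AntitoneOn (delayLyapunov ξ c τ ψ) (Set.Ici 0) := by
  refine antitoneOn_of_deriv_nonpos (convex_Ici 0) (continuous_delayLyapunov hψ).continuousOn
    (fun t ht => ?_) (fun t ht => ?_) <;> rw [interior_Ici] at ht <;>
    obtain ⟨ψ', hψ', hle⟩ := hderiv t ht
  · exact (hasDerivAt_delayLyapunov hψ hψ').differentiableAt.differentiableWithinAt
  · exact (hasDerivAt_delayLyapunov hψ hψ').deriv ▸ hle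

theorem mul_le_delayLyapunov (hξ : ∀ k, 0 ≤ ξ k) (hc : ∀ k j, 0 ≤ c k j) (hτ : ∀ k j, 0 ≤ τ k j)
    (hψ₀ : ∀ k s, 0 ≤ ψ k s) (i : Fin n) (t : ℝ) : ξ i * ψ i t ≤ delayLyapunov ξ c τ ψ t := by
  have hpast : 0 ≤ ∑ k, ∑ j, c k j * ∫ s in (t - τ k j)..t, ψ j s :=
    sum_nonneg fun k _ => sum_nonneg fun j _ => mul_nonneg (hc k j)
      (intervalIntegral.integral_nonneg (by linarith [hτ k j]) fun s _ => hψ₀ j s)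
  have hnow : ξ i * ψ i t ≤ ∑ k, ξ k * ψ k t :=
    single_le_sum (f := fun k => ξ k * ψ k t) (fun k _ => mul_nonneg (hξ k) (hψ₀ k t)) (mem_univ i)
  unfold delayLyapunov
  linarith

end delayLyapunov

theorem mul_rpow_sub_one_mul_le {p q : ℝ} (hpq : p.HolderConjugate q) (α : ℝ) {a X Y : ℝ}
    (ha : 0 ≤ a) (hX : 0 ≤ X) (hY : 0 ≤ Y) :
    a * X ^ (p - 1) * Y ≤ 1 / q * a ^ ((1 - α) * q) * X ^ p + 1 / p * a ^ (α * p) * Y ^ p := by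
  have hsplit : a * X ^ (p - 1) * Y = a ^ (1 - α) * X ^ (p - 1) * (a ^ α * Y) := by
    rw [mul_mul_mul_comm, ← Real.rpow_add' ha (by norm_num), sub_add_cancel, Real.rpow_one]
    ring
  have hyoung := Real.young_inequality_of_nonneg (by positivity) (by positivity) hpq.symm
    (a := a ^ (1 - α) * X ^ (p - 1)) (b := a ^ α * Y)
  rw [Real.mul_rpow (by positivity) (by positivity), Real.mul_rpow (by positivity) hY,
    ← Real.rpow_mul ha, ← Real.rpow_mul hX, hpq.sub_one_mul_conj, ← Real.rpow_mul ha] at hyoung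
  rw [hsplit]
  exact hyoung.trans_eq (by ring)

theorem sum_sum_erase_comm {ι M : Type*} [Fintype ι] [DecidableEq ι] [AddCommGroup M]
    (f : ι → ι → M) : ∑ i, ∑ j ∈ univ.erase i, f i j = ∑ i, ∑ j ∈ univ.erase i, f j i := by
  simp only [sum_erase_eq_sub (mem_univ _), sum_sub_distrib]
  rw [sum_comm]

theorem rpow_sub_one_mul_sum_le {ι : Type*} {p q X : ℝ} (hpq : p.HolderConjugate q)
    (s : Finset ι) {a w α Y : ι → ℝ} (ha : ∀ j, 0 ≤ a j) (hw : ∀ j, 0 ≤ w j) (hX : 0 ≤ X)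
    (hY : ∀ j, 0 ≤ Y j) :
    X ^ (p - 1) * ∑ j ∈ s, a j * w j * Y j
      ≤ 1 / q * (∑ j ∈ s, w j * a j ^ ((1 - α j) * q)) * X ^ p
        + 1 / p * ∑ j ∈ s, w j * a j ^ (α j * p) * Y j ^ p := by
  rw [mul_sum, mul_sum, sum_mul, mul_sum, ← sum_add_distrib]
  refine sum_le_sum fun j _ => ?_
  calc X ^ (p - 1) * (a j * w j * Y j) = w j * (a j * X ^ (p - 1) * Y j) := by ring
    _ ≤ w j * (1 / q * a j ^ ((1 - α j) * q) * X ^ p + 1 / p * a j ^ (α j * p) * Y j ^ p) :=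
        mul_le_mul_of_nonneg_left (mul_rpow_sub_one_mul_le hpq (α j) (ha j) hX (hY j)) (hw j)
    _ = _ := by ring

-- The left-hand side of the hypothesis of the theorem, with `E i j` in place of `exp (ε * τ i j)`.
noncomputable def conditionLHS {n : ℕ} (p q ε : ℝ) (dlow ξ G F : Fin n → ℝ)
    (A B E α β : Fin n → Fin n → ℝ) (i : Fin n) : ℝ :=
  (-dlow i + ε) * ξ i
    + G i * (ξ i * A i i + (1 / p) * ∑ j ∈ univ.erase i, ξ j * (A j i) ^ (α j i * p))
    + (1 / q) * ξ i * ∑ j ∈ univ.erase i, G j * (A i j) ^ ((1 - α i j) * q)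
    + (1 / p) * F i * ∑ j, ξ j * (B j i) ^ (β j i * p) * E j i
    + (1 / q) * ξ i * ∑ j, F j * (B i j) ^ ((1 - β i j) * q) * E i j

section conditionLHS

variable {n : ℕ} {p q ε : ℝ} {dlow ξ G F : Fin n → ℝ} {A B E α β : Fin n → Fin n → ℝ}
  {x : Fin n → ℝ} {y : Fin n → Fin n → ℝ}

theorem rpow_sub_one_mul_rate_le (hpq : p.HolderConjugate q) (hG : ∀ j, 0 ≤ G j)
    (hF : ∀ j, 0 ≤ F j) (hA : ∀ k j, 0 ≤ A k j) (hB : ∀ k j, 0 ≤ B k j) (hE : ∀ k j, 0 ≤ E k j)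
    (hx : ∀ j, 0 ≤ x j) (hy : ∀ k j, 0 ≤ y k j) (k : Fin n) :
    x k ^ (p - 1) * (-(dlow k - ε) * x k + ∑ j, A k j * G j * x j
        + ∑ j, B k j * F j * E k j * y k j)
      ≤ x k ^ p * (ε - dlow k + G k * A k k
          + 1 / q * ∑ j ∈ univ.erase k, G j * A k j ^ ((1 - α k j) * q)
          + 1 / q * ∑ j, F j * B k j ^ ((1 - β k j) * q) * E k j)
        + 1 / p * ∑ j ∈ univ.erase k, G j * A k j ^ (α k j * p) * x j ^ p
        + 1 / p * ∑ j, F j * B k j ^ (β k j * p) * E k j * y k j ^ p := by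
  have hxk : x k ^ (p - 1) * x k = x k ^ p := by
    rw [← Real.rpow_add_one' (hx k) (by linarith [hpq.lt]), sub_add_cancel]
  have hAk := rpow_sub_one_mul_sum_le hpq (univ.erase k) (hA k) hG (hx k) hx (α := α k)
  have hBk := rpow_sub_one_mul_sum_le hpq univ (hB k) (fun j => mul_nonneg (hF j) (hE k j)) (hx k)
    (hy k) (α := β k)
  rw [← add_sum_erase _ _ (mem_univ k)]
  have hBrate : ∑ j, B k j * F j * E k j * y k j = ∑ j, B k j * (F j * E k j) * y k j :=
    sum_congr rfl fun j _ => by ring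
  have hBcoef : ∑ j, F j * B k j ^ ((1 - β k j) * q) * E k j
      = ∑ j, F j * E k j * B k j ^ ((1 - β k j) * q) := sum_congr rfl fun j _ => by ring
  have hBpast : ∑ j, F j * B k j ^ (β k j * p) * E k j * y k j ^ p
      = ∑ j, F j * E k j * B k j ^ (β k j * p) * y k j ^ p := sum_congr rfl fun j _ => by ring
  rw [hBrate, hBcoef, hBpast]
  linear_combination hAk + hBk + (ε - dlow k + G k * A k k) * hxk

theorem sum_rate_add_sum_delay_nonpos (hpq : p.HolderConjugate q) (hξ : ∀ k, 0 ≤ ξ k)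
    (hG : ∀ j, 0 ≤ G j) (hF : ∀ j, 0 ≤ F j) (hA : ∀ k j, 0 ≤ A k j) (hB : ∀ k j, 0 ≤ B k j)
    (hE : ∀ k j, 0 ≤ E k j) (hx : ∀ j, 0 ≤ x j) (hy : ∀ k j, 0 ≤ y k j)
    (hcond : ∀ i, conditionLHS p q ε dlow ξ G F A B E α β i ≤ 0) :
    ∑ k, ξ k * (p * x k ^ (p - 1) * (-(dlow k - ε) * x k + ∑ j, A k j * G j * x j
        + ∑ j, B k j * F j * E k j * y k j))
      + ∑ k, ∑ j, ξ k * F j * B k j ^ (β k j * p) * E k j * (x j ^ p - y k j ^ p) ≤ 0 := by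
  have hp1 : p * (1 / p) = 1 := mul_one_div_cancel hpq.ne_zero
  have hrow : ∀ k, ξ k * (p * x k ^ (p - 1) * (-(dlow k - ε) * x k + ∑ j, A k j * G j * x j
        + ∑ j, B k j * F j * E k j * y k j))
      ≤ p * x k ^ p * conditionLHS p q ε dlow ξ G F A B E α β k
        - G k * x k ^ p * ∑ j ∈ univ.erase k, ξ j * A j k ^ (α j k * p)
        - F k * x k ^ p * ∑ j, ξ j * B j k ^ (β j k * p) * E j k
        + ξ k * ∑ j ∈ univ.erase k, G j * A k j ^ (α k j * p) * x j ^ p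
        + ∑ j, ξ k * F j * B k j ^ (β k j * p) * E k j * y k j ^ p := by
    intro k
    have hle := mul_le_mul_of_nonneg_left
      (rpow_sub_one_mul_rate_le (ε := ε) (dlow := dlow) (α := α) (β := β)
        hpq hG hF hA hB hE hx hy k)
      (mul_nonneg hpq.nonneg (hξ k))
    have hV : ∑ j, ξ k * F j * B k j ^ (β k j * p) * E k j * y k j ^ p
        = ξ k * ∑ j, F j * B k j ^ (β k j * p) * E k j * y k j ^ p := by
      rw [mul_sum]; exact sum_congr rfl fun j _ => by ring
    rw [hV]
    unfold conditionLHS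
    linear_combination hle + (ξ k * ∑ j ∈ univ.erase k, G j * A k j ^ (α k j * p) * x j ^ p
      + ξ k * ∑ j, F j * B k j ^ (β k j * p) * E k j * y k j ^ p
      - G k * x k ^ p * ∑ j ∈ univ.erase k, ξ j * A j k ^ (α j k * p)
      - F k * x k ^ p * ∑ j, ξ j * B j k ^ (β j k * p) * E j k) * hp1
  have hswapA : ∑ k, ξ k * ∑ j ∈ univ.erase k, G j * A k j ^ (α k j * p) * x j ^ p
      = ∑ k, G k * x k ^ p * ∑ j ∈ univ.erase k, ξ j * A j k ^ (α j k * p) := by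
    simp only [mul_sum]
    rw [sum_sum_erase_comm]
    exact sum_congr rfl fun k _ => sum_congr rfl fun j _ => by ring
  have hswapB : ∑ k, ∑ j, ξ k * F j * B k j ^ (β k j * p) * E k j * x j ^ p
      = ∑ k, F k * x k ^ p * ∑ j, ξ j * B j k ^ (β j k * p) * E j k := by
    rw [sum_comm]
    simp only [mul_sum]
    exact sum_congr rfl fun k _ => sum_congr rfl fun j _ => by ring
  calc _ ≤ ∑ k, (p * x k ^ p * conditionLHS p q ε dlow ξ G F A B E α β k
        - G k * x k ^ p * ∑ j ∈ univ.erase k, ξ j * A j k ^ (α j k * p)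
        - F k * x k ^ p * ∑ j, ξ j * B j k ^ (β j k * p) * E j k
        + ξ k * ∑ j ∈ univ.erase k, G j * A k j ^ (α k j * p) * x j ^ p
        + ∑ j, ξ k * F j * B k j ^ (β k j * p) * E k j * y k j ^ p)
        + ∑ k, ∑ j, ξ k * F j * B k j ^ (β k j * p) * E k j * (x j ^ p - y k j ^ p) := by
        gcongr with k; exact hrow k
    _ = ∑ k, p * x k ^ p * conditionLHS p q ε dlow ξ G F A B E α β k := by
        -- the transported and delayed terms cancel after exchanging the order of summation
        simp only [mul_sub, sum_sub_distrib, sum_add_distrib, hswapA, ← hswapB]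
        ring
    _ ≤ 0 := sum_nonpos fun k _ =>
        mul_nonpos_of_nonneg_of_nonpos (mul_nonneg hpq.nonneg (Real.rpow_nonneg (hx k) _)) (hcond k)

end conditionLHS

section DelayDiffIneq

variable {n : ℕ} {p q ε : ℝ} {dlow ξ G F : Fin n → ℝ} {A B E α β τ : Fin n → Fin n → ℝ}

theorem DelayDiffIneq.exists_abs_le {w : ℝ → Fin n → ℝ} (hpq : p.HolderConjugate q)
    (hw : ∀ k, Continuous fun t => w t k)
    (hwdiff : DelayDiffIneq (fun k => dlow k - ε) (fun k j => A k j * G j)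
      (fun k j => B k j * F j * E k j) τ w)
    (hτ : ∀ k j, 0 ≤ τ k j) (hξ : ∀ k, 0 < ξ k) (hG : ∀ j, 0 ≤ G j) (hF : ∀ j, 0 ≤ F j)
    (hA : ∀ k j, 0 ≤ A k j) (hB : ∀ k j, 0 ≤ B k j) (hE : ∀ k j, 0 ≤ E k j)
    (hcond : ∀ i, conditionLHS p q ε dlow ξ G F A B E α β i ≤ 0) (i : Fin n) :
    ∃ M, ∀ t, 0 ≤ t → |w t i| ≤ M := by
  set ψ : Fin n → ℝ → ℝ := fun k t => |w t k| ^ p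
  set c : Fin n → Fin n → ℝ := fun k j => ξ k * F j * B k j ^ (β k j * p) * E k j
  have hψ : ∀ k, Continuous (ψ k) := fun k => (hw k).abs.rpow_const fun _ => Or.inr hpq.nonneg
  have hanti : AntitoneOn (delayLyapunov ξ c τ ψ) (Set.Ici 0) := by
    refine antitoneOn_delayLyapunov hψ fun t ht => ?_
    have hderiv : ∀ k, ∃ D, HasDerivAt (ψ k) D t ∧ D ≤ p * |w t k| ^ (p - 1) *
        (-(dlow k - ε) * |w t k| + ∑ j, A k j * G j * |w t j|
          + ∑ j, B k j * F j * E k j * |w (t - τ k j) j|) := fun k => by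
      obtain ⟨w', hw', hle⟩ := hwdiff k t ht
      exact hw'.abs_rpow_le hpq.lt hle
    choose D hD hDle using hderiv
    refine ⟨D, hD, le_trans ?_ (sum_rate_add_sum_delay_nonpos hpq (fun k => (hξ k).le) hG hF hA hB
      hE (fun k => abs_nonneg (w t k)) (fun k j => abs_nonneg (w (t - τ k j) j)) hcond)⟩
    exact add_le_add (sum_le_sum fun k _ => mul_le_mul_of_nonneg_left (hDle k) (hξ k).le) le_rfl
  refine ⟨(delayLyapunov ξ c τ ψ 0 / ξ i) ^ p⁻¹, fun t ht => ?_⟩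
  have hc : ∀ k j, 0 ≤ c k j := fun k j =>
    mul_nonneg (mul_nonneg (mul_nonneg (hξ k).le (hF j)) (Real.rpow_nonneg (hB k j) _)) (hE k j)
  have hbound : ξ i * ψ i t ≤ delayLyapunov ξ c τ ψ 0 :=
    (mul_le_delayLyapunov (fun k => (hξ k).le) hc hτ
      (fun k s => Real.rpow_nonneg (abs_nonneg (w s k)) p) i t).trans
      (hanti Set.self_mem_Ici (Set.mem_Ici.2 ht) ht)
  rw [← Real.rpow_rpow_inv (abs_nonneg (w t i)) hpq.ne_zero]
  refine Real.rpow_le_rpow (by positivity) ?_ (inv_nonneg.2 hpq.nonneg)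
  rwa [le_div_iff₀' (hξ i)]

theorem DelayDiffIneq.exists_abs_le_mul_exp {z : ℝ → Fin n → ℝ} {T : ℝ}
    (hpq : p.HolderConjugate q) (hz : ∀ k, ContinuousOn (fun t => z t k) (Set.Ici (-T)))
    (hzdiff : DelayDiffIneq dlow (fun k j => A k j * G j) (fun k j => B k j * F j) τ z)
    (hτ : ∀ k j, 0 ≤ τ k j) (hτT : ∀ k j, τ k j ≤ T) (hξ : ∀ k, 0 < ξ k)
    (hG : ∀ j, 0 ≤ G j) (hF : ∀ j, 0 ≤ F j) (hA : ∀ k j, 0 ≤ A k j) (hB : ∀ k j, 0 ≤ B k j)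
    (hcond : ∀ i, conditionLHS p q ε dlow ξ G F A B (fun k j => exp (ε * τ k j)) α β i ≤ 0)
    (i : Fin n) : ∃ C > 0, ∀ t, 0 ≤ t → |z t i| ≤ C * exp (-ε * t) := by
  have hT : 0 ≤ T := (hτ i i).trans (hτT i i)
  have hw : ∀ k, Continuous fun t => exp (ε * t) * z (max t (-T)) k := fun k =>
    (continuous_exp.comp (continuous_const_mul ε)).mul
      ((hz k).comp_continuous (continuous_id.max continuous_const) fun s =>
        Set.mem_Ici.2 (le_max_right _ _))
  obtain ⟨M, hM⟩ := ((hzdiff.comp_max hT hτT).exp_mul ε).exists_abs_le hpq hw hτ hξ hG hF hA hB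
    (fun k j => (exp_pos _).le) hcond i
  refine ⟨|M| + 1, by positivity, fun t ht => ?_⟩
  have hMt := hM t ht
  rw [max_eq_left (by linarith), abs_mul, abs_exp] at hMt
  calc |z t i| = exp (-ε * t) * (exp (ε * t) * |z t i|) := by
        rw [← mul_assoc, ← exp_add]; simp
    _ ≤ exp (-ε * t) * (|M| + 1) := by gcongr; linarith [le_abs_self M]
    _ = (|M| + 1) * exp (-ε * t) := mul_comm _ _

end DelayDiffIneq

theorem theorem1_uniqueness_general
    (n : ℕ) (ω : ℝ) (hω : 0 < ω)
    (d : Fin n → ℝ → ℝ) (a b : Fin n → Fin n → ℝ → ℝ) (I : Fin n → ℝ → ℝ)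
    (ha_per : ∀ i j, Function.Periodic (a i j) ω)
    (hb_per : ∀ i j, Function.Periodic (b i j) ω)
    (τ : Fin n → Fin n → ℝ) (hτ : ∀ i j, 0 ≤ τ i j)
    (τmax : ℝ) (hτmax : IsGreatest {x | ∃ i j, x = τ i j} τmax)
    (dlow : Fin n → ℝ)
    (hdlow : ∀ i t, dlow i ≤ d i t)
    (astar bstar : Fin n → Fin n → ℝ)
    (hastar : ∀ i j, IsLUB ((fun t => |a i j t|) '' Set.Ioc 0 ω) (astar i j))
    (hbstar : ∀ i j, IsLUB ((fun t => |b i j t|) '' Set.Ioc 0 ω) (bstar i j))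
    (G F : Fin n → ℝ) (hG : ∀ i, 0 < G i) (hF : ∀ i, 0 < F i)
    (g f : Fin n → ℝ → ℝ)
    (hg : ∀ i x u, |g i (x + u) - g i x| ≤ G i * |u|)
    (hf : ∀ i x u, |f i (x + u) - f i x| ≤ F i * |u|)
    (p q : ℝ) (hp : 1 < p) (hpq : 1 / p + 1 / q = 1)
    (ε : ℝ) (ξ : Fin n → ℝ) (hξ : ∀ i, 0 < ξ i)
    (α β : Fin n → Fin n → ℝ)
    (hineq : ∀ i,
      (-dlow i + ε) * ξ i
        + G i * (ξ i * astar i i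
            + (1 / p) * ∑ j ∈ univ.erase i, ξ j * (astar j i) ^ (α j i * p))
        + (1 / q) * ξ i * ∑ j ∈ univ.erase i, G j * (astar i j) ^ ((1 - α i j) * q)
        + (1 / p) * F i * ∑ j, ξ j * (bstar j i) ^ (β j i * p) * exp (ε * τ j i)
        + (1 / q) * ξ i * ∑ j, F j * (bstar i j) ^ ((1 - β i j) * q) * exp (ε * τ i j)
        ≤ 0) :
    ∀ u v : ℝ → Fin n → ℝ, IsSolution n τmax d a b I g f τ u →
      IsSolution n τmax d a b I g f τ v →
      ∀ i, ∃ C > 0, ∀ t : ℝ, 0 ≤ t →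
        |u t i - v t i| ≤ C * exp (-ε * t) := by
  intro u v hu hv i
  have hpq' : p.HolderConjugate q :=
    Real.holderConjugate_iff.2 ⟨hp, by simpa only [one_div] using hpq⟩
  have ha : ∀ k j t, |a k j t| ≤ astar k j := fun k j =>
    (ha_per k j).abs_le_of_isLUB hω (hastar k j)
  have hb : ∀ k j t, |b k j t| ≤ bstar k j := fun k j =>
    (hb_per k j).abs_le_of_isLUB hω (hbstar k j)
  exact (hu.delayDiffIneq_sub hv hdlow ha hb hg hf).exists_abs_le_mul_exp hpq'
    (fun k => (hu.1 k).sub (hv.1 k)) hτ (fun k j => hτmax.2 ⟨k, j, rfl⟩) hξ (fun j => (hG j).le)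
    (fun j => (hF j).le) (fun k j => (abs_nonneg _).trans (ha k j 0))
    (fun k j => (abs_nonneg _).trans (hb k j 0)) hineq i

/-- Exponential contraction of pairs of solutions (uniqueness part of Theorem 1). -/
theorem theorem1_uniqueness
    (n : ℕ) (hn : 1 ≤ n) (ω : ℝ) (hω : 0 < ω)
    (d : Fin n → ℝ → ℝ) (a b : Fin n → Fin n → ℝ → ℝ) (I : Fin n → ℝ → ℝ)
    (hd_cont : ∀ i, Continuous (d i)) (ha_cont : ∀ i j, Continuous (a i j))
    (hb_cont : ∀ i j, Continuous (b i j)) (hI_cont : ∀ i, Continuous (I i))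
    (hd_per : ∀ i, Function.Periodic (d i) ω)
    (ha_per : ∀ i j, Function.Periodic (a i j) ω)
    (hb_per : ∀ i j, Function.Periodic (b i j) ω)
    (hI_per : ∀ i, Function.Periodic (I i) ω)
    (τ : Fin n → Fin n → ℝ) (hτ : ∀ i j, 0 ≤ τ i j)
    (τmax : ℝ) (hτmax : IsGreatest {x | ∃ i j, x = τ i j} τmax)
    (dlow : Fin n → ℝ) (hdlow_pos : ∀ i, 0 < dlow i)
    (hdlow : ∀ i t, dlow i ≤ d i t)
    (astar bstar : Fin n → Fin n → ℝ)
    (hastar : ∀ i j, IsLUB ((fun t => |a i j t|) '' Set.Ioc 0 ω) (astar i j))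
    (hbstar : ∀ i j, IsLUB ((fun t => |b i j t|) '' Set.Ioc 0 ω) (bstar i j))
    (G F : Fin n → ℝ) (hG : ∀ i, 0 < G i) (hF : ∀ i, 0 < F i)
    (g f : Fin n → ℝ → ℝ)
    (hg : ∀ i x u, |g i (x + u) - g i x| ≤ G i * |u|)
    (hf : ∀ i x u, |f i (x + u) - f i x| ≤ F i * |u|)
    (p q : ℝ) (hp : 1 < p) (hq : 1 < q) (hpq : 1 / p + 1 / q = 1)
    (ε : ℝ) (hε : 0 < ε) (ξ : Fin n → ℝ) (hξ : ∀ i, 0 < ξ i)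
    (α β : Fin n → Fin n → ℝ)
    (hineq : ∀ i,
      (-dlow i + ε) * ξ i
        + G i * (ξ i * astar i i
            + (1 / p) * ∑ j ∈ univ.erase i, ξ j * (astar j i) ^ (α j i * p))
        + (1 / q) * ξ i * ∑ j ∈ univ.erase i, G j * (astar i j) ^ ((1 - α i j) * q)
        + (1 / p) * F i * ∑ j, ξ j * (bstar j i) ^ (β j i * p) * exp (ε * τ j i)
        + (1 / q) * ξ i * ∑ j, F j * (bstar i j) ^ ((1 - β i j) * q) * exp (ε * τ i j)
        ≤ 0) :
    ∀ u v : ℝ → Fin n → ℝ, IsSolution n τmax d a b I g f τ u →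
      IsSolution n τmax d a b I g f τ v →
      ∀ i, ∃ C > 0, ∀ t : ℝ, 0 ≤ t →
        |u t i - v t i| ≤ C * exp (-ε * t) :=
  theorem1_uniqueness_general n ω hω d a b I ha_per hb_per τ hτ τmax hτmax dlow hdlow astar bstar
    hastar hbstar G F hG hF g f hg hf p q hp hpq ε ξ hξ α β hineq
end

section
/- Theorem 4: Let n ≥ 1 and let c_i > 0, G_i > 0, F_i > 0, c_{ij} ≥ 0, d_{ij} ≥ 0, e_{ij} ≥ 0 (i,j = 1,…,n) be real numbers. Suppose there exist ξ_i > 0, real constants α_{ij}, β_{ij}, and p > 1, q > 1 with 1/p + 1/q = 1 such that for every i: −c_i ξ_i + (1/p)Σ_{j≠i} c_{ji}^{α_{ji}p} G_i ξ_j + (1/q)Σ_{j≠i} c_{ij}^{(1−α_{ij})q} G_j ξ_i + (1/p)Σ_{j≠i} d_{ji}^{β_{ji}p} e_{ji} F_i ξ_j + (1/q)Σ_{j≠i} d_{ij}^{(1−β_{ij})q} e_{ij} F_j ξ_i ≤ 0. Then there exist constants θ_i > 0 (i = 1,…,n) such that for every i: −c_i θ_i + G_i Σ_{j≠i} θ_j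 c_{ji} + F_i Σ_{j≠i} θ_j d_{ji} e_{ji} ≤ 0. -/
/-
Put `a i j = C i j ^ (α i j * p) * G j + D i j ^ (β i j * p) * E i j * F j`, let `b` be the
same with exponents `(1 - α i j) * q` and `(1 - β i j) * q`, and put
`V i j = C i j * G j + D i j * E i j * F j` (all off the diagonal). Hölder's inequality gives
`V ≤ a ^ (1/p) * b ^ (1/q)` entrywise, the hypothesis reads
`p⁻¹ ∑ j, a j i ξ j + q⁻¹ ξ i ∑ j, b i j ≤ c i ξ i`, and we want `θ > 0` with
`∑ j, θ j V j i ≤ c i θ i`.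
If some nonzero `y ≥ 0` satisfies `c y ≤ V y`, multiply the `i`-th inequality by
`ξ i * y i ^ (p - 1)`, apply Young's inequality termwise and sum: the hypothesis closes the chain,
so every Young inequality is an equality. This rigidity forces `V` to vanish between the support
of `y` and its complement, `θ = ξ * y ^ (p - 1)` works on the support, and we induct on the number
of indices for the complement. If there is no such `y`, Gordan's theorem of the alternative
produces `θ` directly, even with strict inequalities.
-/

open Real Finset Matrix

theorem Matrix.exists_nonneg_vecMul_neg_of_forall_mem_stdSimplex {m n : Type*} [Fintype m]
    [Fintype n] {K : Matrix m n ℝ} (h : ∀ y ∈ stdSimplex ℝ n, ∃ i, (K *ᵥ y) i < 0) :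
    ∃ θ : m → ℝ, (∀ i, 0 ≤ θ i) ∧ ∀ j, (θ ᵥ* K) j < 0 := by
  classical
  have hdisj : Disjoint (K.mulVecLin '' stdSimplex ℝ n) (ProperCone.positive ℝ (m → ℝ)) := by
    refine Set.disjoint_left.2 ?_
    rintro _ ⟨y, hy, rfl⟩ hpos
    obtain ⟨i, hi⟩ := h y hy
    exact hi.not_ge (hpos i)
  obtain ⟨f, hf_nonneg, hf_neg⟩ := (ProperCone.positive ℝ (m → ℝ)).hyperplane_separation
    ((convex_stdSimplex ℝ n).linear_image _) ((isCompact_stdSimplex ℝ n).image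
      K.mulVecLin.continuous_of_finiteDimensional) hdisj
  refine ⟨fun i => f (Pi.single i 1), fun i => hf_nonneg _ (by simp [Pi.single_nonneg]),
    fun j => ?_⟩
  have := hf_neg _ ⟨_, single_mem_stdSimplex ℝ j, rfl⟩
  have hsingle (i : m) : (fun k => if i = k then (1 : ℝ) else 0) = Pi.single i 1 := by
    ext k; simp [Pi.single_apply, eq_comm]
  rw [show f _ = (f : (m → ℝ) →ₗ[ℝ] ℝ) _ from rfl, LinearMap.pi_apply_eq_sum_univ] at this
  simpa [vecMul, dotProduct, mulVec_single, hsingle, mul_comm] using this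

section

variable {ι : Type*} [Fintype ι] {p q : ℝ}

theorem exists_pos_sum_mul_lt_of_forall_mem_stdSimplex {V : ι → ι → ℝ} {c : ι → ℝ}
    (hV : ∀ i j, 0 ≤ V i j) (h : ∀ y ∈ stdSimplex ℝ ι, ∃ i, ∑ j, V i j * y j < c i * y i) :
    ∃ θ : ι → ℝ, (∀ i, 0 < θ i) ∧ ∀ i, ∑ j, θ j * V j i < c i * θ i := by
  classical
  obtain ⟨θ, hθ, hθK⟩ :=
    (Matrix.of V - diagonal c).exists_nonneg_vecMul_neg_of_forall_mem_stdSimplex fun y hy => by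
      obtain ⟨i, hi⟩ := h y hy
      refine ⟨i, ?_⟩
      rw [sub_mulVec, Pi.sub_apply, mulVec_diagonal, sub_neg]
      simpa only [mulVec, dotProduct, of_apply] using hi
  have hθV (i : ι) : ∑ j, θ j * V j i < c i * θ i := by
    have := hθK i
    rw [vecMul_sub, Pi.sub_apply, vecMul_diagonal, sub_neg, mul_comm] at this
    simpa only [vecMul, dotProduct, of_apply] using this
  refine ⟨θ, fun i => (hθ i).lt_of_ne' fun hθi => ?_, hθV⟩
  have := hθV i
  rw [hθi, mul_zero] at this
  exact this.not_ge (sum_nonneg fun j _ => mul_nonneg (hθ j) (hV j i))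

theorem rpow_eq_rpow_sub_one_mul (hp : p ≠ 0) {x : ℝ} (hx : 0 ≤ x) : x ^ p = x ^ (p - 1) * x := by
  simpa using rpow_add_one' hx (by simpa using hp : p - 1 + 1 ≠ 0)

theorem rpow_inv_mul_rpow (hp : p ≠ 0) {a t : ℝ} (ha : 0 ≤ a) (ht : 0 ≤ t) :
    (a ^ p⁻¹ * t) ^ p = a * t ^ p := by
  rw [mul_rpow (rpow_nonneg ha _) ht, rpow_inv_rpow ha hp]

theorem rpow_inv_mul_rpow_sub_one_rpow (hpq : p.HolderConjugate q) {b s : ℝ} (hb : 0 ≤ b)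
    (hs : 0 ≤ s) : (b ^ q⁻¹ * s ^ (p - 1)) ^ q = b * s ^ p := by
  rw [mul_rpow (rpow_nonneg hb _) (rpow_nonneg hs _), rpow_inv_rpow hb hpq.symm.ne_zero,
    ← rpow_mul hs, hpq.sub_one_mul_conj]

theorem young_inequality_rpow_sub_one (hpq : p.HolderConjugate q) {a b s t : ℝ} (ha : 0 ≤ a)
    (hb : 0 ≤ b) (hs : 0 ≤ s) (ht : 0 ≤ t) :
    a ^ p⁻¹ * b ^ q⁻¹ * (t * s ^ (p - 1)) ≤ a * t ^ p / p + b * s ^ p / q := by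
  rw [mul_mul_mul_comm, ← rpow_inv_mul_rpow hpq.ne_zero ha ht,
    ← rpow_inv_mul_rpow_sub_one_rpow hpq hb hs]
  exact young_inequality_of_nonneg (by positivity) (by positivity) hpq

theorem young_inequality_rpow_sub_one_eq_iff (hpq : p.HolderConjugate q) {a b s t : ℝ}
    (ha : 0 ≤ a) (hb : 0 ≤ b) (hs : 0 ≤ s) (ht : 0 ≤ t) :
    a ^ p⁻¹ * b ^ q⁻¹ * (t * s ^ (p - 1)) = a * t ^ p / p + b * s ^ p / q
      ↔ a * t ^ p = b * s ^ p := by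
  rw [mul_mul_mul_comm, ← rpow_inv_mul_rpow hpq.ne_zero ha ht,
    ← rpow_inv_mul_rpow_sub_one_rpow hpq hb hs]
  exact young_inequality_eq_iff_of_nonneg (by positivity) (by positivity) hpq

structure LpCriterion (p q : ℝ) (a b V : ι → ι → ℝ) (c ξ : ι → ℝ) : Prop where
  a_nonneg : ∀ i j, 0 ≤ a i j
  b_nonneg : ∀ i j, 0 ≤ b i j
  V_nonneg : ∀ i j, 0 ≤ V i j
  V_le : ∀ i j, V i j ≤ a i j ^ p⁻¹ * b i j ^ q⁻¹
  weight_pos : ∀ i, 0 < ξ i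
  sum_le : ∀ i, p⁻¹ * ∑ j, a j i * ξ j + q⁻¹ * ξ i * ∑ j, b i j ≤ c i * ξ i

namespace LpCriterion

variable {a b V : ι → ι → ℝ} {c ξ : ι → ℝ}

theorem sum_young_le (h : LpCriterion p q a b V c ξ) {y : ι → ℝ} (hy : 0 ≤ y) :
    ∑ x : ι × ι, ξ x.1 * (a x.1 x.2 * y x.2 ^ p / p + b x.1 x.2 * y x.1 ^ p / q)
      ≤ ∑ i, c i * ξ i * y i ^ p := by
  have hswap : ∑ x : ι × ι, ξ x.1 * (a x.1 x.2 * y x.2 ^ p / p + b x.1 x.2 * y x.1 ^ p / q)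
      = ∑ i, (p⁻¹ * ∑ j, a j i * ξ j + q⁻¹ * ξ i * ∑ j, b i j) * y i ^ p := by
    simp only [Fintype.sum_prod_type, mul_add, sum_add_distrib, add_mul, mul_sum, sum_mul]
    rw [sum_comm (f := fun i j => ξ i * (a i j * y j ^ p / p))]
    congr 1 <;> exact sum_congr rfl fun i _ => sum_congr rfl fun j _ => by ring
  rw [hswap]
  exact sum_le_sum fun i _ =>
    (mul_le_mul_of_nonneg_right (h.sum_le i) (rpow_nonneg (hy i) _)).trans_eq (by ring)

theorem eq_of_certificate (hpq : p.HolderConjugate q) (h : LpCriterion p q a b V c ξ)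
    {y : ι → ℝ} (hy : 0 ≤ y) (hcert : ∀ i, c i * y i ≤ ∑ j, V i j * y j) (i j : ι) :
    a i j * y j ^ p = b i j * y i ^ p ∧ V i j * (y j * y i ^ (p - 1)) = b i j * y i ^ p := by
  set L : ι × ι → ℝ := fun x => ξ x.1 * (V x.1 x.2 * (y x.2 * y x.1 ^ (p - 1)))
  set M : ι × ι → ℝ := fun x =>
    ξ x.1 * (a x.1 x.2 ^ p⁻¹ * b x.1 x.2 ^ q⁻¹ * (y x.2 * y x.1 ^ (p - 1)))
  set R : ι × ι → ℝ := fun x =>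
    ξ x.1 * (a x.1 x.2 * y x.2 ^ p / p + b x.1 x.2 * y x.1 ^ p / q)
  have hLM (x : ι × ι) : L x ≤ M x :=
    mul_le_mul_of_nonneg_left (mul_le_mul_of_nonneg_right (h.V_le _ _)
      (mul_nonneg (hy _) (rpow_nonneg (hy _) _))) (h.weight_pos _).le
  have hMR (x : ι × ι) : M x ≤ R x :=
    mul_le_mul_of_nonneg_left (young_inequality_rpow_sub_one hpq (h.a_nonneg _ _)
      (h.b_nonneg _ _) (hy _) (hy _)) (h.weight_pos _).le
  have hL : ∑ i, c i * ξ i * y i ^ p ≤ ∑ x, L x := by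
    rw [Fintype.sum_prod_type]
    refine sum_le_sum fun i _ => ?_
    calc c i * ξ i * y i ^ p = ξ i * y i ^ (p - 1) * (c i * y i) := by
          rw [rpow_eq_rpow_sub_one_mul hpq.ne_zero (hy i)]; ring
      _ ≤ ξ i * y i ^ (p - 1) * ∑ j, V i j * y j :=
          mul_le_mul_of_nonneg_left (hcert i)
            (mul_nonneg (h.weight_pos i).le (rpow_nonneg (hy i) _))
      _ = ∑ j, L (i, j) := by rw [mul_sum]; exact sum_congr rfl fun j _ => by ring
  have hLR : L (i, j) = R (i, j) :=
    (sum_eq_sum_iff_of_le fun x _ => (hLM x).trans (hMR x)).1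
      ((sum_le_sum fun x _ => (hLM x).trans (hMR x)).antisymm (hL.trans' (h.sum_young_le hy)))
      (i, j) (mem_univ _)
  have hyoung : a i j * y j ^ p = b i j * y i ^ p :=
    (young_inequality_rpow_sub_one_eq_iff hpq (h.a_nonneg i j) (h.b_nonneg i j) (hy i) (hy j)).1
      (mul_left_cancel₀ (h.weight_pos i).ne' ((hMR (i, j)).antisymm (hLR ▸ hLM (i, j))))
  refine ⟨hyoung, mul_left_cancel₀ (h.weight_pos i).ne' (hLR.trans ?_)⟩
  simp only [R, hyoung]
  linear_combination ξ i * (b i j * y i ^ p) * hpq.inv_add_inv_eq_one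

theorem V_eq_zero_of_a_eq_zero (hp : p ≠ 0) (h : LpCriterion p q a b V c ξ) {i j : ι}
    (ha : a i j = 0) : V i j = 0 :=
  le_antisymm (by simpa [ha, zero_rpow (inv_ne_zero hp)] using h.V_le i j)
    (h.V_nonneg i j)

theorem V_eq_zero_of_b_eq_zero (hq : q ≠ 0) (h : LpCriterion p q a b V c ξ) {i j : ι}
    (hb : b i j = 0) : V i j = 0 :=
  le_antisymm (by simpa [hb, zero_rpow (inv_ne_zero hq)] using h.V_le i j)
    (h.V_nonneg i j)

theorem V_eq_zero_of_certificate (hpq : p.HolderConjugate q) (h : LpCriterion p q a b V c ξ)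
    {y : ι → ℝ} (hy : 0 ≤ y) (hcert : ∀ i, c i * y i ≤ ∑ j, V i j * y j) {i j : ι}
    (hi : y i = 0) (hj : y j ≠ 0) : V i j = 0 ∧ V j i = 0 := by
  have hyj : 0 < y j ^ p := rpow_pos_of_pos ((hy j).lt_of_ne' hj) p
  have hij := (h.eq_of_certificate hpq hy hcert i j).1
  have hji := (h.eq_of_certificate hpq hy hcert j i).2
  rw [hi, zero_rpow hpq.ne_zero, mul_zero] at hij
  rw [hi, zero_mul, mul_zero, eq_comm] at hji
  exact ⟨h.V_eq_zero_of_a_eq_zero hpq.ne_zero (by simpa [hyj.ne'] using hij),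
    h.V_eq_zero_of_b_eq_zero hpq.symm.ne_zero (by simpa [hyj.ne'] using hji)⟩

theorem mul_rpow_eq_of_certificate (hpq : p.HolderConjugate q) (h : LpCriterion p q a b V c ξ)
    {y : ι → ℝ} (hy : 0 ≤ y) (hcert : ∀ i, c i * y i ≤ ∑ j, V i j * y j) {i : ι}
    (hi : y i ≠ 0) (j : ι) : V j i * y j ^ (p - 1) = a j i * y i ^ (p - 1) := by
  obtain ⟨ha, hV⟩ := h.eq_of_certificate hpq hy hcert j i
  refine mul_right_cancel₀ hi ?_
  rw [mul_assoc, mul_assoc, ← rpow_eq_rpow_sub_one_mul hpq.ne_zero (hy i), ha, ← hV]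
  ring

theorem mul_eq_of_certificate (hpq : p.HolderConjugate q) (h : LpCriterion p q a b V c ξ)
    {y : ι → ℝ} (hy : 0 ≤ y) (hcert : ∀ i, c i * y i ≤ ∑ j, V i j * y j) {i : ι}
    (hi : y i ≠ 0) (j : ι) : V i j * y j = b i j * y i := by
  have hV := (h.eq_of_certificate hpq hy hcert i j).2
  refine mul_right_cancel₀ (rpow_pos_of_pos ((hy i).lt_of_ne' hi) (p - 1)).ne' ?_
  rw [rpow_eq_rpow_sub_one_mul hpq.ne_zero (hy i)] at hV
  linear_combination hV

theorem le_sum_of_certificate (hpq : p.HolderConjugate q) (h : LpCriterion p q a b V c ξ)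
    {y : ι → ℝ} (hy : 0 ≤ y) (hcert : ∀ i, c i * y i ≤ ∑ j, V i j * y j) {i : ι}
    (hi : y i ≠ 0) : c i ≤ ∑ j, b i j := by
  refine le_of_mul_le_mul_right ?_ ((hy i).lt_of_ne' hi)
  calc c i * y i ≤ ∑ j, V i j * y j := hcert i
    _ = (∑ j, b i j) * y i := by
      rw [sum_mul]; exact sum_congr rfl fun j _ => h.mul_eq_of_certificate hpq hy hcert hi j

theorem sum_le_of_certificate (hpq : p.HolderConjugate q) (h : LpCriterion p q a b V c ξ)
    {y : ι → ℝ} (hy : 0 ≤ y) (hcert : ∀ i, c i * y i ≤ ∑ j, V i j * y j) {i : ι}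
    (hi : y i ≠ 0) : ∑ j, a j i * ξ j ≤ c i * ξ i := by
  have hb := mul_le_mul_of_nonneg_left (h.le_sum_of_certificate hpq hy hcert hi)
    (mul_nonneg hpq.symm.inv_nonneg (h.weight_pos i).le)
  have hsum : p⁻¹ * ∑ j, a j i * ξ j ≤ p⁻¹ * (c i * ξ i) := by
    linear_combination h.sum_le i + hb - c i * ξ i * hpq.inv_add_inv_eq_one
  exact le_of_mul_le_mul_left hsum hpq.inv_pos

theorem exists_pos_of_certificate (hpq : p.HolderConjugate q) (h : LpCriterion p q a b V c ξ)
    {y : ι → ℝ} (hy : 0 ≤ y) (hcert : ∀ i, c i * y i ≤ ∑ j, V i j * y j)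
    (χ : {i // y i = 0} → ℝ) (hχ_pos : ∀ i, 0 < χ i)
    (hχ : ∀ i : {i // y i = 0}, ∑ j, χ j * V j i ≤ c i * χ i) :
    ∃ θ : ι → ℝ, (∀ i, 0 < θ i) ∧ ∀ i, ∑ j, θ j * V j i ≤ c i * θ i := by
  classical
  set θ : ι → ℝ := fun i => if hi : y i = 0 then χ ⟨i, hi⟩ else ξ i * y i ^ (p - 1)
  have hθ_zero {i : ι} (hi : y i = 0) : θ i = χ ⟨i, hi⟩ := dif_pos hi
  have hθ_ne {i : ι} (hi : y i ≠ 0) : θ i = ξ i * y i ^ (p - 1) := dif_neg hi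
  refine ⟨θ, fun i => ?_, fun i => ?_⟩
  · by_cases hi : y i = 0
    · exact hθ_zero hi ▸ hχ_pos _
    · exact hθ_ne hi ▸ mul_pos (h.weight_pos i) (rpow_pos_of_pos ((hy i).lt_of_ne' hi) _)
  by_cases hi : y i = 0
  · rw [← Fintype.sum_subtype_add_sum_subtype (fun j => y j = 0), hθ_zero hi]
    have hcross : ∑ j : {j // ¬ y j = 0}, θ j * V j i = 0 := sum_eq_zero fun j _ => by
      rw [(h.V_eq_zero_of_certificate hpq hy hcert hi j.2).2, mul_zero]
    rw [hcross, add_zero]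
    convert hχ ⟨i, hi⟩ using 3 with j
    exact hθ_zero j.2
  have hterm (j : ι) : θ j * V j i ≤ a j i * ξ j * y i ^ (p - 1) := by
    by_cases hj : y j = 0
    · rw [(h.V_eq_zero_of_certificate hpq hy hcert hj hi).1, mul_zero]
      exact mul_nonneg (mul_nonneg (h.a_nonneg j i) (h.weight_pos j).le) (rpow_nonneg (hy i) _)
    · refine le_of_eq ?_
      calc θ j * V j i = ξ j * (V j i * y j ^ (p - 1)) := by rw [hθ_ne hj]; ring
        _ = a j i * ξ j * y i ^ (p - 1) := by
          rw [h.mul_rpow_eq_of_certificate hpq hy hcert hi j]; ring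
  calc ∑ j, θ j * V j i ≤ ∑ j, a j i * ξ j * y i ^ (p - 1) := sum_le_sum fun j _ => hterm j
    _ = (∑ j, a j i * ξ j) * y i ^ (p - 1) := (sum_mul ..).symm
    _ ≤ c i * ξ i * y i ^ (p - 1) := mul_le_mul_of_nonneg_right
          (h.sum_le_of_certificate hpq hy hcert hi) (rpow_nonneg (hy i) _)
    _ = c i * θ i := by rw [hθ_ne hi, mul_assoc]

theorem restrict (hpq : p.HolderConjugate q) (h : LpCriterion p q a b V c ξ) (P : ι → Prop)
    [DecidablePred P] :
    LpCriterion p q (fun i j : Subtype P => a i j) (fun i j : Subtype P => b i j)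
      (fun i j : Subtype P => V i j) (fun i => c i) (fun i => ξ i) where
  a_nonneg i j := h.a_nonneg i j
  b_nonneg i j := h.b_nonneg i j
  V_nonneg i j := h.V_nonneg i j
  V_le i j := h.V_le i j
  weight_pos i := h.weight_pos i
  sum_le i := by
    have hsub {f : ι → ℝ} (hf : ∀ j, 0 ≤ f j) : ∑ j : Subtype P, f j ≤ ∑ j, f j := by
      rw [← Fintype.sum_subtype_add_sum_subtype P f]
      exact le_add_of_nonneg_right (sum_nonneg fun j _ => hf j)
    refine le_trans (add_le_add ?_ ?_) (h.sum_le i)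
    · exact mul_le_mul_of_nonneg_left
        (hsub fun j => mul_nonneg (h.a_nonneg j i) (h.weight_pos j).le) hpq.inv_nonneg
    · exact mul_le_mul_of_nonneg_left (hsub (h.b_nonneg i))
        (mul_nonneg hpq.symm.inv_nonneg (h.weight_pos i).le)

theorem exists_pos_sum_mul_le (hpq : p.HolderConjugate q) (h : LpCriterion p q a b V c ξ) :
    ∃ θ : ι → ℝ, (∀ i, 0 < θ i) ∧ ∀ i, ∑ j, θ j * V j i ≤ c i * θ i := by
  classical
  induction hn : Fintype.card ι using Nat.strong_induction_on generalizing ι with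
  | _ n ih =>
  by_cases hcert : ∃ y ∈ stdSimplex ℝ ι, ∀ i, c i * y i ≤ ∑ j, V i j * y j
  · obtain ⟨y, hy, hcert⟩ := hcert
    obtain ⟨i₀, hi₀⟩ : ∃ i, y i ≠ 0 := by
      by_contra! hy0
      simpa [hy0] using hy.2
    obtain ⟨χ, hχ_pos, hχ⟩ := ih _ (hn ▸ Fintype.card_subtype_lt hi₀)
      (h.restrict hpq (fun i => y i = 0)) rfl
    exact h.exists_pos_of_certificate hpq hy.1 hcert χ hχ_pos hχ
  · push Not at hcert
    obtain ⟨θ, hθ_pos, hθ⟩ := exists_pos_sum_mul_lt_of_forall_mem_stdSimplex h.V_nonneg hcert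
    exact ⟨θ, hθ_pos, fun i => (hθ i).le⟩

end LpCriterion

theorem mul_le_rpow_mul_rpow (hpq : p.HolderConjugate q) {t w : ℝ} (γ : ℝ) (ht : 0 ≤ t)
    (hw : 0 ≤ w) : t * w ≤ (t ^ (γ * p) * w) ^ p⁻¹ * (t ^ ((1 - γ) * q) * w) ^ q⁻¹ := by
  rcases ht.eq_or_lt with rfl | ht
  · rw [zero_mul]; positivity
  refine le_of_eq ?_
  rw [mul_rpow (by positivity) hw, mul_rpow (by positivity) hw, ← rpow_mul ht.le,
    ← rpow_mul ht.le, mul_inv_cancel_right₀ hpq.ne_zero, mul_inv_cancel_right₀ hpq.symm.ne_zero]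
  calc t * w = t ^ (γ + (1 - γ)) * w ^ (p⁻¹ + q⁻¹) := by
        rw [add_sub_cancel, rpow_one, hpq.inv_add_inv_eq_one, rpow_one]
    _ = _ := by
      rw [rpow_add ht, rpow_add' hw (by rw [hpq.inv_add_inv_eq_one]; exact one_ne_zero)]
      ring

theorem add_rpow_mul_rpow_le (hpq : p.HolderConjugate q) {x₁ x₂ y₁ y₂ : ℝ} (hx₁ : 0 ≤ x₁)
    (hx₂ : 0 ≤ x₂) (hy₁ : 0 ≤ y₁) (hy₂ : 0 ≤ y₂) :
    x₁ ^ p⁻¹ * y₁ ^ q⁻¹ + x₂ ^ p⁻¹ * y₂ ^ q⁻¹ ≤ (x₁ + x₂) ^ p⁻¹ * (y₁ + y₂) ^ q⁻¹ := by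
  have := inner_le_Lp_mul_Lq_of_nonneg univ hpq (f := ![x₁ ^ p⁻¹, x₂ ^ p⁻¹])
    (g := ![y₁ ^ q⁻¹, y₂ ^ q⁻¹]) (by simp [Fin.forall_fin_two, rpow_nonneg, *])
    (by simp [Fin.forall_fin_two, rpow_nonneg, *])
  simpa [Fin.sum_univ_two, rpow_inv_rpow, hx₁, hx₂, hy₁, hy₂, hpq.ne_zero, hpq.symm.ne_zero]
    using this

theorem mul_add_mul_le_rpow_mul_rpow (hpq : p.HolderConjugate q) {t₁ t₂ w₁ w₂ : ℝ}
    (γ₁ γ₂ : ℝ) (ht₁ : 0 ≤ t₁) (ht₂ : 0 ≤ t₂) (hw₁ : 0 ≤ w₁) (hw₂ : 0 ≤ w₂) :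
    t₁ * w₁ + t₂ * w₂ ≤ (t₁ ^ (γ₁ * p) * w₁ + t₂ ^ (γ₂ * p) * w₂) ^ p⁻¹
      * (t₁ ^ ((1 - γ₁) * q) * w₁ + t₂ ^ ((1 - γ₂) * q) * w₂) ^ q⁻¹ :=
  (add_le_add (mul_le_rpow_mul_rpow hpq γ₁ ht₁ hw₁) (mul_le_rpow_mul_rpow hpq γ₂ ht₂ hw₂)).trans
    (add_rpow_mul_rpow_le hpq (by positivity) (by positivity) (by positivity) (by positivity))

theorem exists_pos_sum_erase_mul_le [DecidableEq ι] (hpq : p.HolderConjugate q)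
    {a b V : ι → ι → ℝ} {c ξ : ι → ℝ} (ha : ∀ i j, 0 ≤ a i j) (hb : ∀ i j, 0 ≤ b i j)
    (hV : ∀ i j, 0 ≤ V i j) (hVab : ∀ i j, V i j ≤ a i j ^ p⁻¹ * b i j ^ q⁻¹)
    (hξ : ∀ i, 0 < ξ i)
    (h : ∀ i, p⁻¹ * ∑ j ∈ univ.erase i, a j i * ξ j + q⁻¹ * ∑ j ∈ univ.erase i, b i j * ξ i
      ≤ c i * ξ i) :
    ∃ θ : ι → ℝ, (∀ i, 0 < θ i) ∧ ∀ i, ∑ j ∈ univ.erase i, θ j * V j i ≤ c i * θ i := by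
  let offDiag (f : ι → ι → ℝ) (i j : ι) : ℝ := if i ≠ j then f i j else 0
  have hcrit : LpCriterion p q (offDiag a) (offDiag b) (offDiag V) c ξ :=
    { a_nonneg i j := by simp only [offDiag]; split_ifs; exacts [ha i j, le_rfl]
      b_nonneg i j := by simp only [offDiag]; split_ifs; exacts [hb i j, le_rfl]
      V_nonneg i j := by simp only [offDiag]; split_ifs; exacts [hV i j, le_rfl]
      V_le i j := by
        simp only [offDiag]; split_ifs
        exacts [hVab i j, by simp [zero_rpow (inv_ne_zero hpq.ne_zero)]]
      weight_pos := hξ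
      sum_le i := by
        have hcol : ∑ j, offDiag a j i * ξ j = ∑ j ∈ univ.erase i, a j i * ξ j := by
          simp only [offDiag, ite_mul, zero_mul, ← sum_filter, filter_ne']
        have hrow : ξ i * ∑ j, offDiag b i j = ∑ j ∈ univ.erase i, b i j * ξ i := by
          simp only [offDiag, ← sum_filter, filter_ne, mul_sum, mul_comm]
        rw [mul_assoc, hcol, hrow]
        exact h i }
  obtain ⟨θ, hθ_pos, hθ⟩ := hcrit.exists_pos_sum_mul_le hpq
  refine ⟨θ, hθ_pos, fun i => ?_⟩
  simpa only [offDiag, mul_ite, mul_zero, ← sum_filter, filter_ne'] using hθ i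

end

theorem theorem4_general
    (n : ℕ)
    (c G F : Fin n → ℝ) (hG : ∀ i, 0 < G i) (hF : ∀ i, 0 < F i)
    (C D E : Fin n → Fin n → ℝ)
    (hC : ∀ i j, 0 ≤ C i j) (hD : ∀ i j, 0 ≤ D i j) (hE : ∀ i j, 0 ≤ E i j)
    (ξ : Fin n → ℝ) (hξ : ∀ i, 0 < ξ i)
    (α β : Fin n → Fin n → ℝ)
    (p q : ℝ) (hp : 1 < p) (hpq : 1 / p + 1 / q = 1)
    (hineq : ∀ i,
      -c i * ξ i
        + (1 / p) * ∑ j ∈ univ.erase i, C j i ^ (α j i * p) * G i * ξ j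
        + (1 / q) * ∑ j ∈ univ.erase i, C i j ^ ((1 - α i j) * q) * G j * ξ i
        + (1 / p) * ∑ j ∈ univ.erase i, D j i ^ (β j i * p) * E j i * F i * ξ j
        + (1 / q) * ∑ j ∈ univ.erase i, D i j ^ ((1 - β i j) * q) * E i j * F j * ξ i
        ≤ 0) :
    ∃ θ : Fin n → ℝ, (∀ i, 0 < θ i) ∧ ∀ i,
      -c i * θ i + G i * ∑ j ∈ univ.erase i, θ j * C j i
        + F i * ∑ j ∈ univ.erase i, θ j * D j i * E j i ≤ 0 := by
  have hpq' : p.HolderConjugate q := holderConjugate_iff.2 ⟨hp, by simpa only [one_div] using hpq⟩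
  have hCG (j : Fin n) {t : ℝ} (ht : 0 ≤ t) : 0 ≤ t * G j := mul_nonneg ht (hG j).le
  have hDEF (i j : Fin n) {t : ℝ} (ht : 0 ≤ t) : 0 ≤ t * E i j * F j :=
    mul_nonneg (mul_nonneg ht (hE i j)) (hF j).le
  obtain ⟨θ, hθ_pos, hθ⟩ := exists_pos_sum_erase_mul_le hpq'
    (a := fun i j => C i j ^ (α i j * p) * G j + D i j ^ (β i j * p) * E i j * F j)
    (b := fun i j => C i j ^ ((1 - α i j) * q) * G j + D i j ^ ((1 - β i j) * q) * E i j * F j)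
    (V := fun i j => C i j * G j + D i j * E i j * F j) (c := c)
    (fun i j => add_nonneg (hCG j (rpow_nonneg (hC i j) _)) (hDEF i j (rpow_nonneg (hD i j) _)))
    (fun i j => add_nonneg (hCG j (rpow_nonneg (hC i j) _)) (hDEF i j (rpow_nonneg (hD i j) _)))
    (fun i j => add_nonneg (hCG j (hC i j)) (hDEF i j (hD i j)))
    (fun i j => by
      simpa only [mul_assoc] using mul_add_mul_le_rpow_mul_rpow hpq' (α i j) (β i j) (hC i j)
        (hD i j) (hG j).le (mul_nonneg (hE i j) (hF j).le))
    hξ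
    (fun i => by simp only [add_mul, sum_add_distrib, one_div] at hineq ⊢; linarith [hineq i])
  refine ⟨θ, hθ_pos, fun i => ?_⟩
  have hV : ∑ j ∈ univ.erase i, θ j * (C j i * G i + D j i * E j i * F i)
      = G i * ∑ j ∈ univ.erase i, θ j * C j i + F i * ∑ j ∈ univ.erase i, θ j * D j i * E j i := by
    rw [mul_sum, mul_sum, ← sum_add_distrib]
    exact sum_congr rfl fun j _ => by ring
  linarith [hθ i]

/-- Theorem 4: the `L^p`-type criterion with parameters `α, β` implies the `L¹`-type criterion. -/
theorem theorem4
    (n : ℕ) (hn : 1 ≤ n)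
    (c G F : Fin n → ℝ) (hc : ∀ i, 0 < c i) (hG : ∀ i, 0 < G i) (hF : ∀ i, 0 < F i)
    (C D E : Fin n → Fin n → ℝ)
    (hC : ∀ i j, 0 ≤ C i j) (hD : ∀ i j, 0 ≤ D i j) (hE : ∀ i j, 0 ≤ E i j)
    (ξ : Fin n → ℝ) (hξ : ∀ i, 0 < ξ i)
    (α β : Fin n → Fin n → ℝ)
    (p q : ℝ) (hp : 1 < p) (hq : 1 < q) (hpq : 1 / p + 1 / q = 1)
    (hineq : ∀ i,
      -c i * ξ i
        + (1 / p) * ∑ j ∈ univ.erase i, C j i ^ (α j i * p) * G i * ξ j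
        + (1 / q) * ∑ j ∈ univ.erase i, C i j ^ ((1 - α i j) * q) * G j * ξ i
        + (1 / p) * ∑ j ∈ univ.erase i, D j i ^ (β j i * p) * E j i * F i * ξ j
        + (1 / q) * ∑ j ∈ univ.erase i, D i j ^ ((1 - β i j) * q) * E i j * F j * ξ i
        ≤ 0) :
    ∃ θ : Fin n → ℝ, (∀ i, 0 < θ i) ∧ ∀ i,
      -c i * θ i + G i * ∑ j ∈ univ.erase i, θ j * C j i
        + F i * ∑ j ∈ univ.erase i, θ j * D j i * E j i ≤ 0 :=
  theorem4_general n c G F hG hF C D E hC hD hE ξ hξ α β p q hp hpq hineq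
end

section
/- Theorem 6: Let n ≥ 1, let p > 1, q > 1 with 1/p + 1/q = 1, and let d_i, G_i > 0, F_i > 0, τ_{ij} ≥ 0 and a_{ij}, b_{ij} (i,j = 1,…,n) be real numbers. Suppose there exist positive constants ε, ξ_i and real constants α_{ij}, β_{ij} such that for every i at least one of the following holds: (A) (−d_i + ε)ξ_i + G_i[ξ_i|a_{ii}| + (1/p)Σ_{j≠i} ξ_j |a_{ji}|^{α_{ji}p}] + (1/q)ξ_i Σ_{j≠i} G_j |a_{ij}|^{(1−α_{ij})q} + (1/p)F_i Σ_{j=1}^n ξ_j |b_{ji}|^{β_{ji}p} e^{ε τ_{ji}} + (1/q)ξ_i Σ_{j=1}^n F_j |b_{ij}|^{(1−β_{ij})q} e^{ε τ_{ij}} ≤ 0 for all i; or (B) the same with α_{ij} = β_{ij} = 1/p, i.e. (−d_i + ε)ξ_i + G_i[ξ_i|a_{ii}| + (1/p)Σ_{j≠i} ξ_j |a_{ji}|] + (1/q)ξ_i Σ_{j≠i} G_j |a_{ij}| + (1/p)F_i Σ_{j=1}^n ξ_j |b_{ji}| e^{ε τ_{ji}} + (1/q)ξ_i Σ_{j=1}^n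 F_j |b_{ij}| e^{ε τ_{ij}} ≤ 0 for all i. Then there exist constants θ_i > 0 such that for every i: (−d_i + ε)θ_i + G_i[θ_i|a_{ii}| + Σ_{j≠i} θ_j |a_{ji}|] + F_i Σ_{j=1}^n θ_j |b_{ji}| e^{ε τ_{ji}} ≤ 0. -/
/-!
Split the `L^p` criterion into two nonnegative matrices: `P i j` and `Q j i` are the two Hölder
factors of the coupling from `j` to `i`. Then `K i j = P i j ^ (1/p) * Q j i ^ (1/q)` dominates
the `L¹` coupling weighted by `ξ j` (Hölder for two terms), while the criterion says that the
Young budgets `b i = ∑ j, (P i j / p + Q i j / q)` are at most `c i = (d i - ε - G i |a i i|) ξ i`.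
It therefore suffices to find `w > 0` with `K w ≤ b w` componentwise, and to take `θ = ξ w`.

Such a `w` exists for all nonnegative `P, Q`, by induction on the index set. If `K` is diagonal,
`w = 1` works by Young's inequality. Otherwise take an edge `K a j₀ ≠ 0` and eliminate `a`:
adding to `P` the fill-in `P i a * P a j / ∑ k, P a k` (and likewise to `Q`) does not increase
the budgets, and by Hölder the new kernel dominates the Schur complement
`K i j + K i a * K a j / D`, where `D = b a - K a a > 0`. A solution on the remaining indices
extends by `w a = (∑ j, K a j * w j) / D`.
-/

open Real Finset

section HolderKernel

variable {ι : Type*} {p q : ℝ}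

theorem rpow_inv_mul_rpow_inv_add_le (hpq : p.HolderConjugate q) {a b c d : ℝ}
    (ha : 0 ≤ a) (hb : 0 ≤ b) (hc : 0 ≤ c) (hd : 0 ≤ d) :
    a ^ p⁻¹ * b ^ q⁻¹ + c ^ p⁻¹ * d ^ q⁻¹ ≤ (a + c) ^ p⁻¹ * (b + d) ^ q⁻¹ := by
  have h := inner_le_Lp_mul_Lq_of_nonneg (s := univ) (f := ![a ^ p⁻¹, c ^ p⁻¹])
    (g := ![b ^ q⁻¹, d ^ q⁻¹]) hpq
    (by intro i _; fin_cases i <;> simp <;> positivity)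
    (by intro i _; fin_cases i <;> simp <;> positivity)
  simpa [Fin.sum_univ_two, rpow_inv_rpow, ha, hb, hc, hd, hpq.ne_zero, hpq.symm.ne_zero] using h

theorem mul_le_rpow_inv_mul_rpow_inv (hpq : p.HolderConjugate q) {C t : ℝ} (hC : 0 ≤ C)
    (ht : 0 ≤ t) (α : ℝ) :
    C * t ≤ (C * t ^ (α * p)) ^ p⁻¹ * (C * t ^ ((1 - α) * q)) ^ q⁻¹ := by
  rcases ht.eq_or_lt with rfl | ht
  · rw [mul_zero]; positivity
  rw [mul_rpow hC (by positivity), mul_rpow hC (by positivity), ← rpow_mul ht.le,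
    ← rpow_mul ht.le, mul_inv_cancel_right₀ hpq.ne_zero, mul_inv_cancel_right₀ hpq.symm.ne_zero]
  refine le_of_eq ?_
  calc C * t = C ^ (p⁻¹ + q⁻¹) * t ^ (α + (1 - α)) := by
        rw [hpq.inv_add_inv_eq_one, add_sub_cancel, rpow_one, rpow_one]
    _ = C ^ p⁻¹ * t ^ α * (C ^ q⁻¹ * t ^ (1 - α)) := by
        rw [rpow_add' hC (by rw [hpq.inv_add_inv_eq_one]; norm_num), rpow_add ht]; ring

noncomputable def holderKernel (p q : ℝ) (P Q : ι → ι → ℝ) (i j : ι) : ℝ :=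
  P i j ^ p⁻¹ * Q j i ^ q⁻¹

noncomputable def youngBudget (p q : ℝ) (P Q : ι → ι → ℝ) (s : Finset ι) (i : ι) : ℝ :=
  ∑ j ∈ s, (p⁻¹ * P i j + q⁻¹ * Q i j)

noncomputable def eliminate (M : ι → ι → ℝ) (s : Finset ι) (a : ι) (i j : ι) : ℝ :=
  M i j + M i a * M a j / ∑ k ∈ s, M a k

variable {P Q : ι → ι → ℝ}

theorem holderKernel_nonneg (hP : ∀ i j, 0 ≤ P i j) (hQ : ∀ i j, 0 ≤ Q i j) (i j : ι) :
    0 ≤ holderKernel p q P Q i j := by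
  have := hP i j; have := hQ j i
  unfold holderKernel; positivity

theorem holderKernel_le (hpq : p.HolderConjugate q) (hP : ∀ i j, 0 ≤ P i j)
    (hQ : ∀ i j, 0 ≤ Q i j) (i j : ι) :
    holderKernel p q P Q i j ≤ p⁻¹ * P i j + q⁻¹ * Q j i :=
  geom_mean_le_arith_mean2_weighted hpq.inv_nonneg hpq.symm.inv_nonneg (hP i j) (hQ j i)
    hpq.inv_add_inv_eq_one

theorem pos_of_holderKernel_ne_zero (hpq : p.HolderConjugate q) {i j : ι}
    (hP : 0 ≤ P i j) (h : holderKernel p q P Q i j ≠ 0) : 0 < P i j := by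
  refine hP.lt_of_ne' fun h0 => h ?_
  rw [holderKernel, h0, zero_rpow hpq.inv_ne_zero, zero_mul]

theorem holderKernel_eq_zero_of_right (hpq : p.HolderConjugate q) {i j : ι} (h : Q j i = 0) :
    holderKernel p q P Q i j = 0 := by
  rw [holderKernel, h, zero_rpow hpq.symm.inv_ne_zero, mul_zero]

theorem eliminate_nonneg {M : ι → ι → ℝ} (hM : ∀ i j, 0 ≤ M i j) (s : Finset ι) (a i j : ι) :
    0 ≤ eliminate M s a i j := by
  have := hM i j; have := hM i a; have := hM a j
  have : 0 ≤ ∑ k ∈ s, M a k := sum_nonneg fun k _ => hM a k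
  unfold eliminate; positivity

theorem sum_eliminate_le {M : ι → ι → ℝ} (s : Finset ι) (a i : ι) (hM : 0 ≤ M i a) :
    ∑ j ∈ s, eliminate M s a i j ≤ ∑ j ∈ s, M i j + M i a := by
  simp only [eliminate, sum_add_distrib, mul_div_assoc, ← mul_sum, ← sum_div]
  gcongr
  exact mul_le_of_le_one_right hM (div_self_le_one _)

theorem youngBudget_eliminate_le [DecidableEq ι] (hpq : p.HolderConjugate q)
    (hP : ∀ i j, 0 ≤ P i j) (hQ : ∀ i j, 0 ≤ Q i j) {S : Finset ι} {a : ι} (ha : a ∈ S)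
    (i : ι) :
    youngBudget p q (eliminate P (S.erase a) a) (eliminate Q (S.erase a) a) (S.erase a) i ≤
      youngBudget p q P Q S i := by
  have hPi := mul_le_mul_of_nonneg_left (sum_eliminate_le (S.erase a) a i (hP i a))
    hpq.inv_nonneg
  have hQi := mul_le_mul_of_nonneg_left (sum_eliminate_le (S.erase a) a i (hQ i a))
    hpq.symm.inv_nonneg
  rw [youngBudget, youngBudget, ← add_sum_erase S _ ha]
  simp only [sum_add_distrib, ← mul_sum]
  linarith

theorem holderKernel_add_le_eliminate (hpq : p.HolderConjugate q) (hP : ∀ i j, 0 ≤ P i j)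
    (hQ : ∀ i j, 0 ≤ Q i j) (s : Finset ι) (a i j : ι) :
    holderKernel p q P Q i j + holderKernel p q P Q i a * holderKernel p q P Q a j /
        ((∑ k ∈ s, P a k) ^ p⁻¹ * (∑ k ∈ s, Q a k) ^ q⁻¹) ≤
      holderKernel p q (eliminate P s a) (eliminate Q s a) i j := by
  have hσ : 0 ≤ ∑ k ∈ s, P a k := sum_nonneg fun k _ => hP a k
  have hρ : 0 ≤ ∑ k ∈ s, Q a k := sum_nonneg fun k _ => hQ a k
  have := hP i a; have := hP a j; have := hQ j a; have := hQ a i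
  calc _ = P i j ^ p⁻¹ * Q j i ^ q⁻¹ +
        (P i a * P a j / ∑ k ∈ s, P a k) ^ p⁻¹ * (Q j a * Q a i / ∑ k ∈ s, Q a k) ^ q⁻¹ := by
        simp only [holderKernel]
        rw [div_rpow (by positivity) hσ, div_rpow (by positivity) hρ, mul_rpow (hP i a) (hP a j),
          mul_rpow (hQ j a) (hQ a i)]
        ring
    _ ≤ _ := rpow_inv_mul_rpow_inv_add_le hpq (hP i j) (hQ j i) (by positivity) (by positivity)

theorem sum_mul_update_of_mem [DecidableEq ι] (f w : ι → ℝ) {S : Finset ι} {a : ι} (ha : a ∈ S)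
    (t : ℝ) :
    ∑ j ∈ S, f j * Function.update w a t j = f a * t + ∑ j ∈ S.erase a, f j * w j := by
  rw [← add_sum_erase S _ ha, Function.update_self]
  congr 1
  exact sum_congr rfl fun j hj => by rw [Function.update_of_ne (ne_of_mem_erase hj)]

theorem exists_pos_holderKernel_le_youngBudget_of_eliminate [DecidableEq ι]
    (hpq : p.HolderConjugate q) (hP : ∀ i j, 0 ≤ P i j) (hQ : ∀ i j, 0 ≤ Q i j)
    {S : Finset ι} {a j₀ : ι} (ha : a ∈ S) (hj₀ : j₀ ∈ S.erase a)
    (hK : holderKernel p q P Q a j₀ ≠ 0) {w : ι → ℝ} (hw : ∀ i, 0 < w i)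
    (hwS : ∀ i ∈ S.erase a, ∑ j ∈ S.erase a,
      holderKernel p q (eliminate P (S.erase a) a) (eliminate Q (S.erase a) a) i j * w j ≤
      youngBudget p q (eliminate P (S.erase a) a) (eliminate Q (S.erase a) a) (S.erase a) i *
        w i) :
    ∃ w : ι → ℝ, (∀ i, 0 < w i) ∧
      ∀ i ∈ S, ∑ j ∈ S, holderKernel p q P Q i j * w j ≤ youngBudget p q P Q S i * w i := by
  set s := S.erase a
  set K := holderKernel p q P Q
  set σ := ∑ k ∈ s, P a k
  set ρ := ∑ k ∈ s, Q a k
  set A := ∑ j ∈ s, K a j * w j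
  set D := youngBudget p q P Q S a - K a a
  have hK0 := holderKernel_nonneg (p := p) (q := q) hP hQ
  have hσ : 0 < σ :=
    (sum_pos' fun k _ => hP a k) ⟨j₀, hj₀, pos_of_holderKernel_ne_zero hpq (hP a j₀) hK⟩
  have hρ : 0 ≤ ρ := sum_nonneg fun k _ => hQ a k
  have hDσρ : p⁻¹ * σ + q⁻¹ * ρ ≤ D := by
    have := holderKernel_le hpq hP hQ a a
    simp only [D, youngBudget, ← add_sum_erase S _ ha, sum_add_distrib, ← mul_sum]
    linarith
  have hD : 0 < D := by
    have := mul_pos hpq.inv_pos hσ; have := mul_nonneg hpq.symm.inv_nonneg hρ; linarith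
  have hA : 0 < A := (sum_pos' fun j _ => mul_nonneg (hK0 a j) (hw j).le)
    ⟨j₀, hj₀, mul_pos ((hK0 a j₀).lt_of_ne' hK) (hw j₀)⟩
  -- if `ρ = 0` both sides vanish (`K i a = 0`, and the right side divides by zero)
  have hin : ∀ i ∈ s, K i a / D ≤ K i a / (σ ^ p⁻¹ * ρ ^ q⁻¹) := by
    intro i hi
    rcases hρ.eq_or_lt with hρ0 | hρ0
    · have hQ0 : Q a i = 0 := (sum_eq_zero_iff_of_nonneg fun k _ => hQ a k).1 hρ0.symm i hi
      simp [K, holderKernel_eq_zero_of_right hpq hQ0]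
    · refine div_le_div_of_nonneg_left (hK0 i a) (by positivity) ?_
      exact (geom_mean_le_arith_mean2_weighted hpq.inv_nonneg hpq.symm.inv_nonneg hσ.le hρ
        hpq.inv_add_inv_eq_one).trans hDσρ
  refine ⟨Function.update w a (A / D), fun i => ?_, fun i hi => ?_⟩
  · rcases eq_or_ne i a with rfl | hia
    · rw [Function.update_self]; positivity
    · rw [Function.update_of_ne hia]; exact hw i
  rw [sum_mul_update_of_mem (K i) w ha]
  rcases eq_or_ne i a with rfl | hia
  · have : D * (A / D) = A := mul_div_cancel₀ A hD.ne'
    rw [Function.update_self]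
    linarith
  · rw [Function.update_of_ne hia]
    calc K i a * (A / D) + ∑ j ∈ s, K i j * w j
        ≤ K i a / (σ ^ p⁻¹ * ρ ^ q⁻¹) * A + ∑ j ∈ s, K i j * w j := by
          rw [← mul_comm_div]
          gcongr ?_ + _
          exact mul_le_mul_of_nonneg_right (hin i (mem_erase.2 ⟨hia, hi⟩)) hA.le
      _ = ∑ j ∈ s, (K i j + K i a * K a j / (σ ^ p⁻¹ * ρ ^ q⁻¹)) * w j := by
          rw [mul_sum, ← sum_add_distrib]
          exact sum_congr rfl fun j _ => by ring
      _ ≤ ∑ j ∈ s, holderKernel p q (eliminate P s a) (eliminate Q s a) i j * w j :=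
          sum_le_sum fun j _ => mul_le_mul_of_nonneg_right
            (holderKernel_add_le_eliminate hpq hP hQ s a i j) (hw j).le
      _ ≤ youngBudget p q (eliminate P s a) (eliminate Q s a) s i * w i :=
          hwS i (mem_erase.2 ⟨hia, hi⟩)
      _ ≤ youngBudget p q P Q S i * w i :=
          mul_le_mul_of_nonneg_right (youngBudget_eliminate_le hpq hP hQ ha i) (hw i).le

theorem exists_pos_holderKernel_le_youngBudget (hpq : p.HolderConjugate q)
    (hP : ∀ i j, 0 ≤ P i j) (hQ : ∀ i j, 0 ≤ Q i j) (S : Finset ι) :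
    ∃ w : ι → ℝ, (∀ i, 0 < w i) ∧
      ∀ i ∈ S, ∑ j ∈ S, holderKernel p q P Q i j * w j ≤ youngBudget p q P Q S i * w i := by
  classical
  induction S using Finset.strongInduction generalizing P Q with
  | H S ih =>
  by_cases hdiag : ∀ i ∈ S, ∀ j ∈ S.erase i, holderKernel p q P Q i j = 0
  · refine ⟨fun _ => 1, fun _ => one_pos, fun i hi => ?_⟩
    rw [← add_sum_erase S _ hi, sum_eq_zero fun j hj => by rw [hdiag i hi j hj, zero_mul],
      youngBudget, ← add_sum_erase S _ hi, add_zero, mul_one, mul_one]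
    have := holderKernel_le hpq hP hQ i i
    have : 0 ≤ ∑ j ∈ S.erase i, (p⁻¹ * P i j + q⁻¹ * Q i j) := sum_nonneg fun j _ => by
      have := hpq.inv_pos; have := hpq.symm.inv_pos; have := hP i j; have := hQ i j; positivity
    linarith
  push Not at hdiag
  obtain ⟨a, ha, j₀, hj₀, hK⟩ := hdiag
  obtain ⟨w, hw, hwS⟩ := ih (S.erase a) (erase_ssubset ha) (eliminate_nonneg hP (S.erase a) a)
    (eliminate_nonneg hQ (S.erase a) a)
  exact exists_pos_holderKernel_le_youngBudget_of_eliminate hpq hP hQ ha hj₀ hK hw hwS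

theorem exists_pos_sum_mul_le_of_le_holderKernel [Fintype ι] (hpq : p.HolderConjugate q)
    {L : ι → ι → ℝ} {c : ι → ℝ} (hP : ∀ i j, 0 ≤ P i j) (hQ : ∀ i j, 0 ≤ Q i j)
    (hL : ∀ i j, L i j ≤ holderKernel p q P Q i j) (hc : ∀ i, youngBudget p q P Q univ i ≤ c i) :
    ∃ w : ι → ℝ, (∀ i, 0 < w i) ∧ ∀ i, ∑ j, L i j * w j ≤ c i * w i := by
  obtain ⟨w, hw, hK⟩ := exists_pos_holderKernel_le_youngBudget hpq hP hQ univ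
  refine ⟨w, hw, fun i => ?_⟩
  calc ∑ j, L i j * w j ≤ ∑ j, holderKernel p q P Q i j * w j :=
        sum_le_sum fun j _ => mul_le_mul_of_nonneg_right (hL i j) (hw j).le
    _ ≤ youngBudget p q P Q univ i * w i := hK i (mem_univ i)
    _ ≤ c i * w i := mul_le_mul_of_nonneg_right (hc i) (hw i).le

end HolderKernel

section LyapunovWeights

variable {ι : Type*} [DecidableEq ι] (p q : ℝ) (G F ξ : ι → ℝ) (a b τ α β : ι → ι → ℝ) (ε : ℝ)

noncomputable def splitP (i j : ι) : ℝ :=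
  (if j = i then 0 else G i * (ξ j * |a j i| ^ (α j i * p))) +
    F i * (ξ j * |b j i| ^ (β j i * p) * exp (ε * τ j i))

noncomputable def splitQ (i j : ι) : ℝ :=
  ξ i * ((if j = i then 0 else G j * |a i j| ^ ((1 - α i j) * q)) +
    F j * |b i j| ^ ((1 - β i j) * q) * exp (ε * τ i j))

variable {G F ξ}

theorem splitP_nonneg (hG : ∀ i, 0 ≤ G i) (hF : ∀ i, 0 ≤ F i) (hξ : ∀ i, 0 ≤ ξ i) (i j : ι) :
    0 ≤ splitP p G F ξ a b τ α β ε i j := by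
  have := hG i; have := hF i; have := hξ j
  unfold splitP; split_ifs <;> positivity

theorem splitQ_nonneg (hG : ∀ i, 0 ≤ G i) (hF : ∀ i, 0 ≤ F i) (hξ : ∀ i, 0 ≤ ξ i) (i j : ι) :
    0 ≤ splitQ q G F ξ a b τ α β ε i j := by
  have := hG j; have := hF j; have := hξ i
  unfold splitQ; split_ifs <;> positivity

theorem youngBudget_splitP_splitQ [Fintype ι] (i : ι) :
    youngBudget p q (splitP p G F ξ a b τ α β ε) (splitQ q G F ξ a b τ α β ε) univ i =
      G i * (p⁻¹ * ∑ j ∈ univ.erase i, ξ j * |a j i| ^ (α j i * p))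
        + q⁻¹ * ξ i * ∑ j ∈ univ.erase i, G j * |a i j| ^ ((1 - α i j) * q)
        + p⁻¹ * F i * ∑ j, ξ j * |b j i| ^ (β j i * p) * exp (ε * τ j i)
        + q⁻¹ * ξ i * ∑ j, F j * |b i j| ^ ((1 - β i j) * q) * exp (ε * τ i j) := by
  simp only [youngBudget, splitP, splitQ, mul_add, sum_add_distrib, ← mul_sum, sum_ite,
    sum_const_zero, zero_add, filter_ne']
  ring

theorem le_holderKernel_splitP_splitQ (hpq : p.HolderConjugate q) (hG : ∀ i, 0 ≤ G i)
    (hF : ∀ i, 0 ≤ F i) (hξ : ∀ i, 0 ≤ ξ i) (i j : ι) :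
    (if j = i then 0 else G i * ξ j * |a j i|) + F i * ξ j * exp (ε * τ j i) * |b j i| ≤
      holderKernel p q (splitP p G F ξ a b τ α β ε) (splitQ q G F ξ a b τ α β ε) i j := by
  have := hG i; have := hF i; have := hξ j
  unfold holderKernel splitP splitQ
  rw [mul_add]
  refine le_trans (add_le_add ?_ ?_) (rpow_inv_mul_rpow_inv_add_le hpq ?_ ?_ ?_ ?_)
  · by_cases hji : j = i
    · simp only [if_pos hji, if_pos hji.symm, zero_rpow hpq.inv_ne_zero, zero_mul, le_refl]
    · rw [if_neg hji, if_neg hji, if_neg (Ne.symm hji)]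
      refine (mul_le_rpow_inv_mul_rpow_inv hpq (by positivity) (abs_nonneg _) (α j i)).trans_eq ?_
      ring_nf
  · refine (mul_le_rpow_inv_mul_rpow_inv hpq (by positivity) (abs_nonneg _) (β j i)).trans_eq ?_
    ring_nf
  all_goals (try split_ifs) <;> positivity

end LyapunovWeights

theorem exists_l1_weights_of_lp_weights {ι : Type*} [Fintype ι] [DecidableEq ι] {p q : ℝ}
    (hpq : p.HolderConjugate q) {d G F ξ : ι → ℝ} {a b τ α β : ι → ι → ℝ} {ε : ℝ}
    (hG : ∀ i, 0 ≤ G i) (hF : ∀ i, 0 ≤ F i) (hξ : ∀ i, 0 < ξ i)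
    (h : ∀ i,
        (-d i + ε) * ξ i
          + G i * (ξ i * |a i i|
              + (1 / p) * ∑ j ∈ univ.erase i, ξ j * |a j i| ^ (α j i * p))
          + (1 / q) * ξ i * ∑ j ∈ univ.erase i, G j * |a i j| ^ ((1 - α i j) * q)
          + (1 / p) * F i * ∑ j, ξ j * |b j i| ^ (β j i * p) * exp (ε * τ j i)
          + (1 / q) * ξ i * ∑ j, F j * |b i j| ^ ((1 - β i j) * q) * exp (ε * τ i j)
          ≤ 0) :
    ∃ θ : ι → ℝ, (∀ i, 0 < θ i) ∧ ∀ i,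
      (-d i + ε) * θ i
        + G i * (θ i * |a i i| + ∑ j ∈ univ.erase i, θ j * |a j i|)
        + F i * ∑ j, θ j * |b j i| * exp (ε * τ j i) ≤ 0 := by
  have hξ' := fun i => (hξ i).le
  obtain ⟨w, hw, hL⟩ := exists_pos_sum_mul_le_of_le_holderKernel hpq
    (splitP_nonneg p a b τ α β ε hG hF hξ') (splitQ_nonneg q a b τ α β ε hG hF hξ')
    (le_holderKernel_splitP_splitQ p q a b τ α β ε hpq hG hF hξ')
    (c := fun i => (d i - ε - G i * |a i i|) * ξ i) fun i => by
      rw [youngBudget_splitP_splitQ]; simp only [one_div] at h; linarith [h i]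
  refine ⟨fun i => ξ i * w i, fun i => mul_pos (hξ i) (hw i), fun i => ?_⟩
  have hrow : ∀ j, ((if j = i then 0 else G i * ξ j * |a j i|) +
      F i * ξ j * exp (ε * τ j i) * |b j i|) * w j =
      (if j = i then 0 else G i * (ξ j * w j * |a j i|)) +
        F i * (ξ j * w j * |b j i| * exp (ε * τ j i)) := fun j => by
    split_ifs <;> ring
  have := hL i
  rw [sum_congr rfl fun j _ => hrow j, sum_add_distrib, sum_ite, sum_const_zero, zero_add,
    filter_ne', ← mul_sum, ← mul_sum] at this
  linarith

theorem theorem6_general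
    (n : ℕ)
    (p q : ℝ) (hp : 1 < p) (hpq : 1 / p + 1 / q = 1)
    (d G F : Fin n → ℝ) (hG : ∀ i, 0 < G i) (hF : ∀ i, 0 < F i)
    (a b τ : Fin n → Fin n → ℝ)
    (ε : ℝ) (ξ : Fin n → ℝ) (hξ : ∀ i, 0 < ξ i)
    (α β : Fin n → Fin n → ℝ)
    (hineq :
      (∀ i,
        (-d i + ε) * ξ i
          + G i * (ξ i * |a i i|
              + (1 / p) * ∑ j ∈ univ.erase i, ξ j * |a j i| ^ (α j i * p))
          + (1 / q) * ξ i * ∑ j ∈ univ.erase i, G j * |a i j| ^ ((1 - α i j) * q)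
          + (1 / p) * F i * ∑ j, ξ j * |b j i| ^ (β j i * p) * exp (ε * τ j i)
          + (1 / q) * ξ i * ∑ j, F j * |b i j| ^ ((1 - β i j) * q) * exp (ε * τ i j)
          ≤ 0) ∨
      (∀ i,
        (-d i + ε) * ξ i
          + G i * (ξ i * |a i i| + (1 / p) * ∑ j ∈ univ.erase i, ξ j * |a j i|)
          + (1 / q) * ξ i * ∑ j ∈ univ.erase i, G j * |a i j|
          + (1 / p) * F i * ∑ j, ξ j * |b j i| * exp (ε * τ j i)
          + (1 / q) * ξ i * ∑ j, F j * |b i j| * exp (ε * τ i j)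
          ≤ 0)) :
    ∃ θ : Fin n → ℝ, (∀ i, 0 < θ i) ∧ ∀ i,
      (-d i + ε) * θ i
        + G i * (θ i * |a i i| + ∑ j ∈ univ.erase i, θ j * |a j i|)
        + F i * ∑ j, θ j * |b j i| * exp (ε * τ j i) ≤ 0 := by
  have hpq' : p.HolderConjugate q :=
    Real.holderConjugate_iff.2 ⟨hp, by simpa only [one_div] using hpq⟩
  have hG' := fun i => (hG i).le
  have hF' := fun i => (hF i).le
  rcases hineq with h | h
  · exact exists_l1_weights_of_lp_weights hpq' hG' hF' hξ h
  · have hp' : 1 / p * p = 1 := one_div_mul_cancel hpq'.ne_zero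
    have hq' : (1 - 1 / p) * q = 1 := by
      rw [one_div, hpq'.one_sub_inv, inv_mul_cancel₀ hpq'.symm.ne_zero]
    exact exists_l1_weights_of_lp_weights (α := fun _ _ => 1 / p) (β := fun _ _ => 1 / p) hpq'
      hG' hF' hξ (by simpa only [hp', hq', rpow_one] using h)

/-- Theorem 6: either `L^p`-type criterion (general `α, β`, or the symmetric one) implies the `L¹` criterion with the same rate `ε`. -/
theorem theorem6
    (n : ℕ) (hn : 1 ≤ n)
    (p q : ℝ) (hp : 1 < p) (hq : 1 < q) (hpq : 1 / p + 1 / q = 1)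
    (d G F : Fin n → ℝ) (hG : ∀ i, 0 < G i) (hF : ∀ i, 0 < F i)
    (a b τ : Fin n → Fin n → ℝ) (hτ : ∀ i j, 0 ≤ τ i j)
    (ε : ℝ) (hε : 0 < ε) (ξ : Fin n → ℝ) (hξ : ∀ i, 0 < ξ i)
    (α β : Fin n → Fin n → ℝ)
    (hineq :
      (∀ i,
        (-d i + ε) * ξ i
          + G i * (ξ i * |a i i|
              + (1 / p) * ∑ j ∈ univ.erase i, ξ j * |a j i| ^ (α j i * p))
          + (1 / q) * ξ i * ∑ j ∈ univ.erase i, G j * |a i j| ^ ((1 - α i j) * q)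
          + (1 / p) * F i * ∑ j, ξ j * |b j i| ^ (β j i * p) * exp (ε * τ j i)
          + (1 / q) * ξ i * ∑ j, F j * |b i j| ^ ((1 - β i j) * q) * exp (ε * τ i j)
          ≤ 0) ∨
      (∀ i,
        (-d i + ε) * ξ i
          + G i * (ξ i * |a i i| + (1 / p) * ∑ j ∈ univ.erase i, ξ j * |a j i|)
          + (1 / q) * ξ i * ∑ j ∈ univ.erase i, G j * |a i j|
          + (1 / p) * F i * ∑ j, ξ j * |b j i| * exp (ε * τ j i)
          + (1 / q) * ξ i * ∑ j, F j * |b i j| * exp (ε * τ i j)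
          ≤ 0)) :
    ∃ θ : Fin n → ℝ, (∀ i, 0 < θ i) ∧ ∀ i,
      (-d i + ε) * θ i
        + G i * (θ i * |a i i| + ∑ j ∈ univ.erase i, θ j * |a j i|)
        + F i * ∑ j, θ j * |b j i| * exp (ε * τ j i) ≤ 0 :=
  theorem6_general n p q hp hpq d G F hG hF a b τ ε ξ hξ α β hineq
end

section
/- Example 1 (the L¹ criterion is strictly stronger than the symmetric Lᵖ criterion): Let n = 2, d_1 = 2, d_2 = 11, a_{11} = a_{22} = 1, a_{12} = a_{21} = 3, b_{ij} = 0 for all i,j, and G_1 = G_2 = F_1 = F_2 = 1. Then: (i) the constants θ_1 = 19, θ_2 = 6 satisfy the strict L¹ inequalities −d_i θ_i + G_i[θ_i|a_{ii}| + Σ_{j≠i} θ_j |a_{ji}|] + F_i Σ_{j=1}^2 θ_j |b_{ji}| < 0 for i = 1, 2; but (ii) for p = q = 2 and α_{ij} = β_{ij} = 1/2 there exist NO positive constants ξ_1, ξ_2 satisfying, for i = 1, 2, the inequalities −d_i ξ_i + G_i[ξ_i|a_{ii}| + (1/2)Σ_{j≠i} ξ_j |a_{ji}|] + (1/2)ξ_i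 Σ_{j≠i} G_j |a_{ij}| + (1/2)F_i Σ_{j=1}^2 ξ_j |b_{ji}| + (1/2)ξ_i Σ_{j=1}^2 F_j |b_{ij}| < 0. -/
/-!
Apart from `ξ_i (-d_i + G_i |a_ii| + ½ ∑_{j ≠ i} G_j |a_ij|)`, every term of the symmetric `L²`
inequality for species `i` is nonnegative, so it forces `d_1 > |a_11| + ½ |a_12| = 5/2`, which fails
for `d_1 = 2`. The `L¹` inequalities instead charge the coupling `|a_21|` to `θ_2`, which can be
taken small compared with `θ_1`.
-/

open Finset

/-- The symmetric `L²` inequality for species `i` (`p = q = 2`, `α_{ij} = β_{ij} = 1/2`) reads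
`symmetricL2Lhs d a b G F ξ i < 0`. -/
noncomputable def symmetricL2Lhs {ι : Type*} [Fintype ι] [DecidableEq ι] (d : ι → ℝ)
    (a b : ι → ι → ℝ) (G F ξ : ι → ℝ) (i : ι) : ℝ :=
  -d i * ξ i
    + G i * (ξ i * |a i i| + (1 / 2) * ∑ j ∈ univ.erase i, ξ j * |a j i|)
    + (1 / 2) * ξ i * ∑ j ∈ univ.erase i, G j * |a i j|
    + (1 / 2) * F i * ∑ j, ξ j * |b j i|
    + (1 / 2) * ξ i * ∑ j, F j * |b i j|

theorem lt_of_symmetricL2Lhs_neg {ι : Type*} [Fintype ι] [DecidableEq ι] {d : ι → ℝ}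
    {a b : ι → ι → ℝ} {G F ξ : ι → ℝ} {i : ι} (hG : 0 ≤ G i) (hF : ∀ j, 0 ≤ F j)
    (hξ : ∀ j, 0 < ξ j) (h : symmetricL2Lhs d a b G F ξ i < 0) :
    G i * |a i i| + (1 / 2) * ∑ j ∈ univ.erase i, G j * |a i j| < d i := by
  have hcross : 0 ≤ G i * ((1 / 2) * ∑ j ∈ univ.erase i, ξ j * |a j i|) :=
    mul_nonneg hG <| mul_nonneg (by norm_num)
      (sum_nonneg fun j _ => mul_nonneg (hξ j).le (abs_nonneg _))
  have hb_in : 0 ≤ (1 / 2) * F i * ∑ j, ξ j * |b j i| :=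
    mul_nonneg (mul_nonneg (by norm_num) (hF i))
      (sum_nonneg fun j _ => mul_nonneg (hξ j).le (abs_nonneg _))
  have hb_out : 0 ≤ (1 / 2) * ξ i * ∑ j, F j * |b i j| :=
    mul_nonneg (mul_nonneg (by norm_num) (hξ i).le)
      (sum_nonneg fun j _ => mul_nonneg (hF j) (abs_nonneg _))
  have hneg : ξ i * (G i * |a i i| + (1 / 2) * ∑ j ∈ univ.erase i, G j * |a i j| - d i) < 0 := by
    unfold symmetricL2Lhs at h
    linarith
  exact sub_neg.mp (neg_of_mul_neg_right hneg (hξ i).le)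

/-- Example 1: for `n = 2`, `d = (2, 11)`, `a = [[1,3],[3,1]]`, `b = 0`,
`G = F = (1,1)`:
(i) the constants `θ = (19, 6)` satisfy the strict `L¹` inequalities
`-d_i θ_i + G_i[θ_i|a_{ii}| + ∑_{j≠i} θ_j |a_{ji}|] + F_i ∑_j θ_j |b_{ji}| < 0`;
(ii) for `p = q = 2` and `α_{ij} = β_{ij} = 1/2` there are NO positive constants
`ξ_1, ξ_2` satisfying the corresponding symmetric `L²` inequalities. -/
theorem example1
    (d : Fin 2 → ℝ) (hd : d = ![2, 11])
    (a : Fin 2 → Fin 2 → ℝ) (ha : a = ![![1, 3], ![3, 1]])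
    (b : Fin 2 → Fin 2 → ℝ) (hb : b = fun _ _ => 0)
    (G F : Fin 2 → ℝ) (hG : G = ![1, 1]) (hF : F = ![1, 1])
    (θ : Fin 2 → ℝ) (hθ : θ = ![19, 6]) :
    (∀ i,
      -d i * θ i
        + G i * (θ i * |a i i| + ∑ j ∈ univ.erase i, θ j * |a j i|)
        + F i * ∑ j, θ j * |b j i| < 0) ∧
    ¬ ∃ ξ : Fin 2 → ℝ, (∀ i, 0 < ξ i) ∧ ∀ i,
      -d i * ξ i
        + G i * (ξ i * |a i i| + (1 / 2) * ∑ j ∈ univ.erase i, ξ j * |a j i|)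
        + (1 / 2) * ξ i * ∑ j ∈ univ.erase i, G j * |a i j|
        + (1 / 2) * F i * ∑ j, ξ j * |b j i|
        + (1 / 2) * ξ i * ∑ j, F j * |b i j| < 0 := by
  refine ⟨fun i => ?_, fun ⟨ξ, hξ, h⟩ => ?_⟩
  · subst hd ha hb hG hF hθ
    fin_cases i <;> norm_num [sum_erase_eq_sub, Fin.sum_univ_two]
  · have hF_nonneg : ∀ j, 0 ≤ F j := by simp [hF, Fin.forall_fin_two]
    have := lt_of_symmetricL2Lhs_neg (d := d) (a := a) (b := b) (i := 0)
      (by simp [hG]) hF_nonneg hξ (h 0)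
    subst hd ha hG
    norm_num [sum_erase_eq_sub, Fin.sum_univ_two] at this
end
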